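/- arXiv:1109.5565 — 6 statements merged into one kernel-verified Lean document; each statement's English description precedes it below -/
import Mathlib

section
/- Let n ≥ 1, let Ω ⊂ ℝⁿ be a bounded open set with diameter ℓ, let x₀ ∈ Ω, let 1 ≤ p < ∞ with conjugate exponent p′ = p/(p−1), let 0 ≤ λ ≤ n, let A > ℓ and let ε > 0. Then there exists a constant C > 0, not depending on f, such that for every measurable f : Ω → ℝ, (∫_Ω |f(y)|^p |y−x₀|^{λ(p−1)} (ln(A/|y−x₀|))^{−(1+ε)} dy)^{1/p} ≤ C · sup_{r>0} r^{λ/p′} ‖f‖_{L^p(Ω \ B(x₀,r))}. That is, the local complementary Morrey space ∁L^{p,λ}_{x₀}(Ω) embeds into the weighted Lebesgue space L^p(Ω, |y−x₀|^{λ(p−1)} (ln(A/|y−x₀|))^{−(1+ε)}). -/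
/-!
Cut `Ω \ {x₀}` into the annuli `A ρ^{-(k+2)} < |y - x₀| ≤ A ρ^{-(k+1)}` for a ratio `ρ > 1`
with `ρ ℓ < A`. On the `k`-th annulus `|y - x₀|^{λ(p-1)}` is at most `ρ^{λ(p-1)}` times its value
at the inner radius `r`, while `ln (A / |y - x₀|) ≥ (k + 1) ln ρ`. Since `r^{λ(p-1)} ∫_{Ω \ B(x₀,r)} |f|^p`
is the `p`-th power of one term of the supremum, the `k`-th annulus contributes at most
`ρ^{λ(p-1)} ((k + 1) ln ρ)^{-(1+ε)}` times the `p`-th power of the Morrey norm, and these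
constants are summable because `1 + ε > 1`.
-/

open MeasureTheory Metric Set ENNReal Filter Topology

noncomputable def lpnorm {n : ℕ} (p : ℝ) (E : Set (EuclideanSpace ℝ (Fin n)))
    (f : EuclideanSpace ℝ (Fin n) → ℝ) : ℝ≥0∞ :=
  (∫⁻ y in E, ENNReal.ofReal |f y| ^ p) ^ (1 / p)

theorem closedBall_diff_singleton_subset_iUnion {X : Type*} [MetricSpace X] (x : X) {R ρ : ℝ}
    (hρ : 1 < ρ) :
    closedBall x R \ {x} ⊆ ⋃ k : ℕ, closedBall x (R / ρ ^ k) \ closedBall x (R / ρ ^ (k + 1)) := by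
  rintro y ⟨hyR, hyx⟩
  have hd : 0 < dist y x := dist_pos.2 hyx
  obtain ⟨k, hk, hk'⟩ := exists_nat_pow_near ((one_le_div hd).2 (mem_closedBall.1 hyR)) hρ
  have hρk : ∀ j : ℕ, 0 < ρ ^ j := fun j => pow_pos (zero_lt_one.trans hρ) j
  refine mem_iUnion.2 ⟨k, mem_closedBall.2 ?_, fun h => ?_⟩
  · rw [le_div_iff₀ (hρk k), mul_comm]
    rwa [le_div_iff₀ hd] at hk
  · rw [mem_closedBall, le_div_iff₀ (hρk _), mul_comm] at h
    rw [div_lt_iff₀ hd] at hk'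
    exact h.not_gt hk'

theorem rpow_div_log_rpow_le_of_mem_Ioc {ρ R A a β d : ℝ} {k : ℕ} (hρ : 1 < ρ) (hR : 0 < R)
    (hRA : ρ * R ≤ A) (ha : 0 ≤ a) (hβ : 0 ≤ β) (hd : d ∈ Ioc (R / ρ ^ (k + 1)) (R / ρ ^ k)) :
    d ^ a / Real.log (A / d) ^ β ≤
      ρ ^ a / (((k : ℝ) + 1) * Real.log ρ) ^ β * (R / ρ ^ (k + 1)) ^ a := by
  obtain ⟨hd_gt, hd_le⟩ := hd
  have hρ0 : 0 < ρ := zero_lt_one.trans hρ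
  have hr : 0 < R / ρ ^ (k + 1) := by positivity
  have hd0 : 0 < d := hr.trans hd_gt
  have hlog : 0 < ((k : ℝ) + 1) * Real.log ρ := by
    have := Real.log_pos hρ
    positivity
  have hnum : d ^ a ≤ ρ ^ a * (R / ρ ^ (k + 1)) ^ a := by
    rw [← Real.mul_rpow hρ0.le hr.le, pow_succ, ← div_div, mul_div_cancel₀ _ hρ0.ne']
    exact Real.rpow_le_rpow hd0.le hd_le ha
  have hden : ((k : ℝ) + 1) * Real.log ρ ≤ Real.log (A / d) := by
    rw [← Nat.cast_add_one, ← Real.log_pow]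
    apply Real.log_le_log (by positivity)
    rw [le_div_iff₀ hd0]
    calc ρ ^ (k + 1) * d ≤ ρ ^ (k + 1) * (R / ρ ^ k) := by gcongr
      _ = ρ * R := by field_simp; ring
      _ ≤ A := hRA
  calc d ^ a / Real.log (A / d) ^ β
      ≤ ρ ^ a * (R / ρ ^ (k + 1)) ^ a / (((k : ℝ) + 1) * Real.log ρ) ^ β :=
        div_le_div₀ (by positivity) hnum (by positivity) (Real.rpow_le_rpow hlog.le hden hβ)
    _ = _ := by ring

section Annuli

variable {X : Type*} [MetricSpace X] [MeasurableSpace X] {μ : Measure X} {s : Set X} {x₀ : X}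
  {g : X → ℝ≥0∞} {ρ R A a β : ℝ} {K : ℝ≥0∞}

theorem setLIntegral_annulus_le_of_tail_le (hg : Measurable g) (hρ : 1 < ρ) (hR : 0 < R)
    (hRA : ρ * R ≤ A) (ha : 0 ≤ a) (hβ : 0 ≤ β)
    (htail : ∀ r > 0, ENNReal.ofReal (r ^ a) * ∫⁻ y in s \ ball x₀ r, g y ∂μ ≤ K) (k : ℕ) :
    ∫⁻ y in s ∩ (closedBall x₀ (R / ρ ^ k) \ closedBall x₀ (R / ρ ^ (k + 1))),
        ENNReal.ofReal (dist y x₀ ^ a / Real.log (A / dist y x₀) ^ β) * g y ∂μ ≤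
      ENNReal.ofReal (ρ ^ a / (((k : ℝ) + 1) * Real.log ρ) ^ β) * K := by
  set r := R / ρ ^ (k + 1)
  set c := ρ ^ a / (((k : ℝ) + 1) * Real.log ρ) ^ β
  have hρ0 : 0 < ρ := zero_lt_one.trans hρ
  have hr : 0 < r := by positivity
  have hc : 0 ≤ c := by
    have := Real.log_pos hρ
    positivity
  calc _ ≤ ∫⁻ y in s ∩ (closedBall x₀ (R / ρ ^ k) \ closedBall x₀ r),
          ENNReal.ofReal (c * r ^ a) * g y ∂μ := by
        refine setLIntegral_mono (measurable_const.mul hg) fun y ⟨_, hyR, hyr⟩ => ?_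
        gcongr
        exact rpow_div_log_rpow_le_of_mem_Ioc hρ hR hRA ha hβ
          ⟨not_le.1 (hyr ∘ mem_closedBall.2), mem_closedBall.1 hyR⟩
    _ ≤ ENNReal.ofReal c * (ENNReal.ofReal (r ^ a) * ∫⁻ y in s \ ball x₀ r, g y ∂μ) := by
        rw [lintegral_const_mul' _ _ ofReal_ne_top, ENNReal.ofReal_mul hc, mul_assoc]
        gcongr
        exact fun y hy => ⟨hy.1, fun h => hy.2.2 (ball_subset_closedBall h)⟩
    _ ≤ ENNReal.ofReal c * K := by
        gcongr
        exact htail r hr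

theorem lintegral_rpow_div_log_rpow_mul_le_of_tail_le [NullSingletonClass μ] (hg : Measurable g)
    (hρ : 1 < ρ) (hR : 0 < R) (hRA : ρ * R ≤ A) (ha : 0 ≤ a) (hβ : 0 ≤ β)
    (hs : s ⊆ closedBall x₀ R)
    (htail : ∀ r > 0, ENNReal.ofReal (r ^ a) * ∫⁻ y in s \ ball x₀ r, g y ∂μ ≤ K) :
    ∫⁻ y in s, ENNReal.ofReal (dist y x₀ ^ a / Real.log (A / dist y x₀) ^ β) * g y ∂μ ≤
      (∑' k : ℕ, ENNReal.ofReal (ρ ^ a / (((k : ℝ) + 1) * Real.log ρ) ^ β)) * K := by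
  set F := fun y => ENNReal.ofReal (dist y x₀ ^ a / Real.log (A / dist y x₀) ^ β) * g y
  set S := fun k : ℕ => s ∩ (closedBall x₀ (R / ρ ^ k) \ closedBall x₀ (R / ρ ^ (k + 1)))
  have hcover : s \ {x₀} ⊆ ⋃ k, S k := by
    intro y hy
    obtain ⟨k, hk⟩ := mem_iUnion.1 (closedBall_diff_singleton_subset_iUnion x₀ hρ ⟨hs hy.1, hy.2⟩)
    exact mem_iUnion.2 ⟨k, hy.1, hk⟩
  calc ∫⁻ y in s, F y ∂μ = ∫⁻ y in s \ {x₀}, F y ∂μ :=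
        setLIntegral_congr (sdiff_null_ae_eq_self (measure_singleton x₀)).symm
    _ ≤ ∫⁻ y in ⋃ k, S k, F y ∂μ := lintegral_mono_set hcover
    _ ≤ ∑' k, ∫⁻ y in S k, F y ∂μ := lintegral_iUnion_le _ _
    _ ≤ ∑' k : ℕ, ENNReal.ofReal (ρ ^ a / (((k : ℝ) + 1) * Real.log ρ) ^ β) * K :=
        ENNReal.tsum_le_tsum
          (setLIntegral_annulus_le_of_tail_le hg hρ hR hRA ha hβ htail)
    _ = _ := ENNReal.tsum_mul_right

end Annuli

theorem tsum_ofReal_rpow_div_mul_log_rpow_ne_top {ρ a β : ℝ} (hρ : 1 < ρ) (hβ : 1 < β) :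
    ∑' k : ℕ, ENNReal.ofReal (ρ ^ a / (((k : ℝ) + 1) * Real.log ρ) ^ β) ≠ ∞ := by
  have hlog := Real.log_pos hρ
  have hsum : Summable fun k : ℕ => ρ ^ a / (((k : ℝ) + 1) * Real.log ρ) ^ β := by
    refine (((summable_nat_add_iff 1).2 (Real.summable_nat_rpow_inv.2 hβ)).mul_left
      (ρ ^ a / Real.log ρ ^ β)).congr fun k => ?_
    rw [Real.mul_rpow (by positivity) hlog.le]
    push_cast
    field_simp
  rw [← ENNReal.ofReal_tsum_of_nonneg (fun k => by positivity) hsum]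
  exact ofReal_ne_top

theorem rpow_one_div_le_ofReal_mul_of_le_mul_rpow {X S M : ℝ≥0∞} {p : ℝ} (hp : 0 < p)
    (hS : S ≠ ∞) (h : X ≤ S * M ^ p) :
    X ^ (1 / p) ≤ ENNReal.ofReal ((S.toReal + 1) ^ (1 / p)) * M := by
  calc X ^ (1 / p) ≤ (S * M ^ p) ^ (1 / p) := by gcongr
    _ = S ^ (1 / p) * M := by
      rw [ENNReal.mul_rpow_of_nonneg _ _ (by positivity), ← ENNReal.rpow_mul,
        mul_one_div_cancel hp.ne', ENNReal.rpow_one]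
    _ ≤ ENNReal.ofReal (S.toReal + 1) ^ (1 / p) * M := by
      gcongr
      exact (ENNReal.le_ofReal_iff_toReal_le hS (by positivity)).2 (by linarith)
    _ = ENNReal.ofReal ((S.toReal + 1) ^ (1 / p)) * M := by
      rw [ENNReal.ofReal_rpow_of_nonneg (by positivity) (by positivity)]

theorem ofReal_rpow_mul_lpnorm_rpow {n : ℕ} {p r b : ℝ} (hp : 0 < p) (hr : 0 ≤ r)
    (E : Set (EuclideanSpace ℝ (Fin n))) (f : EuclideanSpace ℝ (Fin n) → ℝ) :
    (ENNReal.ofReal (r ^ b) * lpnorm p E f) ^ p =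
      ENNReal.ofReal (r ^ (b * p)) * ∫⁻ y in E, ENNReal.ofReal |f y| ^ p := by
  rw [ENNReal.mul_rpow_of_nonneg _ _ hp.le,
    ENNReal.ofReal_rpow_of_nonneg (Real.rpow_nonneg hr _) hp.le, ← Real.rpow_mul hr, lpnorm,
    ← ENNReal.rpow_mul, one_div_mul_cancel hp.ne', ENNReal.rpow_one]

theorem statement1_general
    (n : ℕ) (hn : 1 ≤ n)
    (Ω : Set (EuclideanSpace ℝ (Fin n))) (hΩb : Bornology.IsBounded Ω)
    (x₀ : EuclideanSpace ℝ (Fin n)) (hx₀ : x₀ ∈ Ω)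
    (p pc : ℝ) (hp : 1 ≤ p) (hpc : pc = p / (p - 1))
    (lam : ℝ) (hlam0 : 0 ≤ lam)
    (ℓ : ℝ) (hℓ : ℓ = Metric.diam Ω)
    (A : ℝ) (hA : ℓ < A)
    (ε : ℝ) (hε : 0 < ε) :
    ∃ C > 0, ∀ f : EuclideanSpace ℝ (Fin n) → ℝ, Measurable f →
      (∫⁻ y in Ω,
          ENNReal.ofReal
              (‖y - x₀‖ ^ (lam * (p - 1)) / Real.log (A / ‖y - x₀‖) ^ (1 + ε)) *
            ENNReal.ofReal |f y| ^ p) ^ (1 / p) ≤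
        ENNReal.ofReal C *
          ⨆ r ∈ Ioi (0 : ℝ),
            ENNReal.ofReal (r ^ (lam / pc)) * lpnorm p (Ω \ ball x₀ r) f := by
  have hp0 : 0 < p := one_pos.trans_le hp
  -- makes `x₀` a null point for `volume`
  have : Nonempty (Fin n) := ⟨⟨0, hn⟩⟩
  -- at `p = 1` this holds because Lean's `p / (p - 1)` is `0`, so both sides vanish
  have hexp : lam / pc * p = lam * (p - 1) := by
    subst hpc
    rcases hp.eq_or_lt with rfl | hp1
    · simp
    · have : p - 1 ≠ 0 := by linarith
      field_simp
  obtain ⟨R, hℓR, hRA⟩ := exists_between hA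
  have hR : 0 < R := (hℓ ▸ diam_nonneg).trans_lt hℓR
  have hρ : 1 < A / R := (one_lt_div hR).2 hRA
  have hΩR : Ω ⊆ closedBall x₀ R := fun y hy =>
    mem_closedBall.2 ((hℓ ▸ dist_le_diam_of_mem hΩb hy hx₀).trans hℓR.le)
  have hS := tsum_ofReal_rpow_div_mul_log_rpow_ne_top (a := lam * (p - 1)) hρ
    (by linarith : 1 < 1 + ε)
  refine ⟨_, by positivity, fun f hf => rpow_one_div_le_ofReal_mul_of_le_mul_rpow hp0 hS ?_⟩
  simp_rw [← dist_eq_norm]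
  refine lintegral_rpow_div_log_rpow_mul_le_of_tail_le (hf.abs.ennreal_ofReal.pow_const p) hρ hR
    (div_mul_cancel₀ A hR.ne').le (by positivity) (by positivity) hΩR fun r hr => ?_
  rw [← hexp, ← ofReal_rpow_mul_lpnorm_rpow hp0 hr.le]
  gcongr
  exact le_iSup₂_of_le r hr le_rfl

/-- For a bounded open `Ω ⊆ ℝⁿ` of diameter `ℓ`, `x₀ ∈ Ω`, `1 ≤ p < ∞` with
conjugate exponent `pc = p/(p−1)`, `0 ≤ λ ≤ n`, `A > ℓ` and `ε > 0`, there is `C > 0`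
(independent of `f`) such that for every measurable `f`,
`(∫_Ω |f(y)|^p |y−x₀|^{λ(p−1)} (ln(A/|y−x₀|))^{−(1+ε)} dy)^{1/p}
  ≤ C · sup_{r>0} r^{λ/p′} ‖f‖_{L^p(Ω \ B(x₀,r))}`. -/
theorem statement1
    (n : ℕ) (hn : 1 ≤ n)
    (Ω : Set (EuclideanSpace ℝ (Fin n))) (hΩo : IsOpen Ω) (hΩb : Bornology.IsBounded Ω)
    (x₀ : EuclideanSpace ℝ (Fin n)) (hx₀ : x₀ ∈ Ω)
    (p pc : ℝ) (hp : 1 ≤ p) (hpc : pc = p / (p - 1))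
    (lam : ℝ) (hlam0 : 0 ≤ lam) (hlamn : lam ≤ (n : ℝ))
    (ℓ : ℝ) (hℓ : ℓ = Metric.diam Ω)
    (A : ℝ) (hA : ℓ < A)
    (ε : ℝ) (hε : 0 < ε) :
    ∃ C > 0, ∀ f : EuclideanSpace ℝ (Fin n) → ℝ, Measurable f →
      (∫⁻ y in Ω,
          ENNReal.ofReal
              (‖y - x₀‖ ^ (lam * (p - 1)) / Real.log (A / ‖y - x₀‖) ^ (1 + ε)) *
            ENNReal.ofReal |f y| ^ p) ^ (1 / p) ≤
        ENNReal.ofReal C *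
          ⨆ r ∈ Ioi (0 : ℝ),
            ENNReal.ofReal (r ^ (lam / pc)) * lpnorm p (Ω \ ball x₀ r) f :=
  statement1_general n hn Ω hΩb x₀ hx₀ p pc hp hpc lam hlam0 ℓ hℓ A hA ε hε
end

section
/- Let n ≥ 1, let Ω ⊂ ℝⁿ be a bounded open set, let x₀ ∈ Ω, let 1 < p < ∞ with conjugate exponent p′ = p/(p−1), and let 0 < λ ≤ n. Define f(x) = |x−x₀|^{−n/p − λ/p′} for x ∈ Ω, x ≠ x₀. Then sup_{r>0} r^{λ/p′} ‖f‖_{L^p(Ω \ B(x₀,r))} < ∞ (so f lies in the local complementary Morrey space ∁L^{p,λ}_{x₀}(Ω)), while ∫_Ω |y−x₀|^{λ(p−1)} |f(y)|^p dy = ∞ (so f does not lie in the weighted Lebesgue space L^p(Ω, |y−x₀|^{λ(p−1)})). Hence the embedding of L^p(Ω, |y−x₀|^{λ(p−1)}) into ∁L^{p,λ}_{x₀}(Ω) is strict. -/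
open MeasureTheory Metric Set ENNReal Filter Topology

/-!
With `β = n + λ(p - 1)` one has `|f|^p = |y - x₀|^{-β}`. In polar coordinates,
`∫_{|y - x₀| ≥ r} |y - x₀|^{-β} = c r^{n - β}` because `β > n`, and since `(β - n)/p = λ/p'`
the factor `r^{λ/p'}` exactly compensates: `r^{λ/p'} ‖f‖_{L^p(Ω \ B(x₀, r))} ≤ c^{1/p}` for all
`r`. On the other hand the weight cancels all of the excess `β - n`, leaving
`|y - x₀|^{λ(p-1)} |f|^p = |y - x₀|^{-n}`, whose integral over any ball around `x₀` diverges
like `∫_0 dt / t`.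
-/

open Module

theorem lintegral_Ici_rpow_of_lt {a : ℝ} (ha : a < -1) {c : ℝ} (hc : 0 < c) :
    ∫⁻ t in Ici c, ENNReal.ofReal (t ^ a) = ENNReal.ofReal (-c ^ (a + 1) / (a + 1)) := by
  have hnonneg : 0 ≤ᵐ[volume.restrict (Ioi c)] fun t : ℝ ↦ t ^ a := by
    filter_upwards [ae_restrict_mem measurableSet_Ioi] with t ht
    exact Real.rpow_nonneg (hc.trans ht).le a
  rw [setLIntegral_congr Ioi_ae_eq_Ici.symm,
    ← ofReal_integral_eq_lintegral_ofReal (integrableOn_Ioi_rpow_of_lt ha hc) hnonneg,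
    integral_Ioi_rpow_of_lt ha hc]

theorem lintegral_Ioo_rpow_neg_one {ε : ℝ} (hε : 0 < ε) :
    ∫⁻ t in Ioo 0 ε, ENNReal.ofReal (t ^ (-1 : ℝ)) = ∞ := by
  have hnonneg : 0 ≤ᵐ[volume.restrict (Ioo 0 ε)] fun t : ℝ ↦ t ^ (-1 : ℝ) := by
    filter_upwards [ae_restrict_mem measurableSet_Ioo] with t ht
    exact Real.rpow_nonneg ht.1.le _
  by_contra h
  have hint := (lintegral_ofReal_ne_top_iff_integrable (by fun_prop) hnonneg).1 h
  exact lt_irrefl _ ((intervalIntegral.integrableOn_Ioo_rpow_iff hε).1 hint)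

theorem ofReal_abs_rpow_rpow {u : ℝ} (hu : 0 ≤ u) (a : ℝ) {p : ℝ} (hp : 0 ≤ p) :
    ENNReal.ofReal |u ^ a| ^ p = ENNReal.ofReal (u ^ (a * p)) := by
  rw [abs_of_nonneg (Real.rpow_nonneg hu a),
    ENNReal.ofReal_rpow_of_nonneg (Real.rpow_nonneg hu a) hp, ← Real.rpow_mul hu]

section Polar

variable {E : Type*} [NormedAddCommGroup E] [NormedSpace ℝ E] [FiniteDimensional ℝ E]
  [MeasurableSpace E] [Nontrivial E] (μ : Measure E) [μ.IsAddHaarMeasure]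

theorem finrank_mul_measureReal_unitBall_pos : 0 < finrank ℝ E * μ.real (ball 0 1) := by
  have hB : 0 < μ.real (ball 0 1) :=
    ENNReal.toReal_pos (measure_ball_pos μ _ one_pos).ne' measure_ball_lt_top.ne
  have hd : 0 < finrank ℝ E := finrank_pos
  positivity

variable [BorelSpace E]

-- Both sides are infinite together, since the radial profile is integrable iff `f ‖·‖` is.
theorem lintegral_ofReal_fun_norm_addHaar {f : ℝ → ℝ} (hf : ∀ t, 0 ≤ t → 0 ≤ f t)
    (hfm : Measurable f) :
    ∫⁻ x, ENNReal.ofReal (f ‖x‖) ∂μ = ENNReal.ofReal (finrank ℝ E * μ.real (ball 0 1)) *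
      ∫⁻ t in Ioi 0, ENNReal.ofReal (t ^ (finrank ℝ E - 1) * f t) := by
  have hf_norm : 0 ≤ᵐ[μ] fun x ↦ f ‖x‖ := ae_of_all _ fun x ↦ hf _ (norm_nonneg x)
  have hradial : 0 ≤ᵐ[volume.restrict (Ioi 0)] fun t : ℝ ↦ t ^ (finrank ℝ E - 1) * f t := by
    filter_upwards [ae_restrict_mem measurableSet_Ioi] with t ht
    exact mul_nonneg (pow_nonneg ht.le _) (hf t ht.le)
  have hf_norm_meas : AEStronglyMeasurable (fun x ↦ f ‖x‖) μ :=
    (hfm.comp measurable_norm).aestronglyMeasurable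
  have hradial_meas : AEStronglyMeasurable (fun t : ℝ ↦ t ^ (finrank ℝ E - 1) * f t)
      (volume.restrict (Ioi 0)) :=
    ((measurable_id.pow_const _).mul hfm).aestronglyMeasurable
  have hpolar := integrable_fun_norm_addHaar μ (f := f)
  simp only [smul_eq_mul] at hpolar
  by_cases hint : Integrable (fun x ↦ f ‖x‖) μ
  · rw [← ofReal_integral_eq_lintegral_ofReal hint hf_norm, integral_fun_norm_addHaar,
      ← ofReal_integral_eq_lintegral_ofReal (hpolar.1 hint) hradial,
      ← ENNReal.ofReal_mul (finrank_mul_measureReal_unitBall_pos μ).le]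
    simp only [nsmul_eq_mul, smul_eq_mul, mul_assoc]
  · have hint' := mt hpolar.2 hint
    rw [← lintegral_ofReal_ne_top_iff_integrable hf_norm_meas hf_norm, not_not] at hint
    rw [IntegrableOn, ← lintegral_ofReal_ne_top_iff_integrable hradial_meas hradial,
      not_not] at hint'
    rw [hint, hint', ENNReal.mul_top (ofReal_pos.2 (finrank_mul_measureReal_unitBall_pos μ)).ne']

theorem setLIntegral_norm_sub_rpow_neg (x₀ : E) (γ : ℝ) {s : Set ℝ} (hs : MeasurableSet s)
    (hs0 : s ⊆ Ioi 0) :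
    ∫⁻ y in (‖· - x₀‖) ⁻¹' s, ENNReal.ofReal (‖y - x₀‖ ^ (-γ)) ∂μ =
      ENNReal.ofReal (finrank ℝ E * μ.real (ball 0 1)) *
        ∫⁻ t in s, ENNReal.ofReal (t ^ ((finrank ℝ E : ℝ) - γ - 1)) := by
  have hprofile : ∀ y, ((‖· - x₀‖) ⁻¹' s).indicator (fun y ↦ ENNReal.ofReal (‖y - x₀‖ ^ (-γ))) y =
      ENNReal.ofReal (s.indicator (· ^ (-γ)) ‖y - x₀‖) := by
    intro y
    by_cases h : ‖y - x₀‖ ∈ s <;> simp [indicator, h]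
  have hradial : ∀ t ∈ Ioi (0 : ℝ),
      ENNReal.ofReal (t ^ (finrank ℝ E - 1) * s.indicator (· ^ (-γ)) t) =
        s.indicator (fun t ↦ ENNReal.ofReal (t ^ ((finrank ℝ E : ℝ) - γ - 1))) t := by
    intro t ht
    by_cases h : t ∈ s
    · have hd : 1 ≤ finrank ℝ E := finrank_pos
      rw [indicator_of_mem h, indicator_of_mem h, ← Real.rpow_natCast, ← Real.rpow_add ht]
      push_cast [hd]
      ring_nf
    · simp [indicator_of_notMem h]
  rw [← lintegral_indicator (hs.preimage (by fun_prop))]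
  simp only [hprofile]
  rw [lintegral_sub_right_eq_self (fun y ↦ ENNReal.ofReal (s.indicator (· ^ (-γ)) ‖y‖)) x₀,
    lintegral_ofReal_fun_norm_addHaar μ (f := s.indicator (· ^ (-γ)))
      (fun t ht ↦ indicator_nonneg (fun t _ ↦ Real.rpow_nonneg ht _) t)
      ((measurable_id.pow_const _).indicator hs),
    setLIntegral_congr_fun measurableSet_Ioi hradial, lintegral_indicator hs,
    Measure.restrict_restrict hs, inter_eq_left.2 hs0]

theorem setLIntegral_compl_ball_norm_sub_rpow_neg (x₀ : E) {β r : ℝ}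
    (hβ : (finrank ℝ E : ℝ) < β) (hr : 0 < r) :
    ∫⁻ y in (ball x₀ r)ᶜ, ENNReal.ofReal (‖y - x₀‖ ^ (-β)) ∂μ =
      ENNReal.ofReal (finrank ℝ E * μ.real (ball 0 1) / (β - finrank ℝ E) *
        r ^ ((finrank ℝ E : ℝ) - β)) := by
  have hcompl : (ball x₀ r)ᶜ = (‖· - x₀‖) ⁻¹' Ici r := by
    ext y
    simp [dist_eq_norm]
  rw [hcompl, setLIntegral_norm_sub_rpow_neg μ x₀ β measurableSet_Ici (Ici_subset_Ioi.2 hr),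
    lintegral_Ici_rpow_of_lt (by linarith) hr,
    ← ENNReal.ofReal_mul (finrank_mul_measureReal_unitBall_pos μ).le,
    sub_add_cancel, neg_div, ← div_neg, neg_sub]
  ring_nf

theorem setLIntegral_ball_norm_sub_rpow_neg_finrank (x₀ : E) {ε : ℝ} (hε : 0 < ε) :
    ∫⁻ y in ball x₀ ε, ENNReal.ofReal (‖y - x₀‖ ^ (-(finrank ℝ E : ℝ))) ∂μ = ∞ := by
  have hpunctured : (‖· - x₀‖) ⁻¹' Ioo 0 ε ⊆ ball x₀ ε := fun y hy ↦ by
    simpa [dist_eq_norm] using hy.2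
  refine top_le_iff.1 (le_trans ?_ (lintegral_mono_set hpunctured))
  rw [setLIntegral_norm_sub_rpow_neg μ x₀ _ measurableSet_Ioo Ioo_subset_Ioi_self,
    sub_self, zero_sub, lintegral_Ioo_rpow_neg_one hε,
    ENNReal.mul_top (ofReal_pos.2 (finrank_mul_measureReal_unitBall_pos μ)).ne']

end Polar

section Euclidean

variable {n : ℕ} [NeZero n]

theorem iSup_rpow_mul_lpnorm_diff_ball_lt_top (Ω : Set (EuclideanSpace ℝ (Fin n)))
    (x₀ : EuclideanSpace ℝ (Fin n)) {p s : ℝ} (hp : 0 < p) (hs : 0 < s)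
    (f : EuclideanSpace ℝ (Fin n) → ℝ)
    (hf : ∀ y, y ≠ x₀ → ENNReal.ofReal |f y| ^ p = ENNReal.ofReal (‖y - x₀‖ ^ (-(n + s * p)))) :
    (⨆ r ∈ Ioi (0 : ℝ), ENNReal.ofReal (r ^ s) * lpnorm p (Ω \ ball x₀ r) f) < ⊤ := by
  have hdim : finrank ℝ (EuclideanSpace ℝ (Fin n)) = n := finrank_euclideanSpace_fin
  set C := n * volume.real (ball (0 : EuclideanSpace ℝ (Fin n)) 1) / (n + s * p - n)
  have hC : 0 ≤ C := div_nonneg (by positivity) (by nlinarith)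
  have htail : ∀ r, 0 < r → ∫⁻ y in Ω \ ball x₀ r, ENNReal.ofReal |f y| ^ p ≤
      ENNReal.ofReal (C * r ^ (-(s * p))) := fun r hr ↦
    calc ∫⁻ y in Ω \ ball x₀ r, ENNReal.ofReal |f y| ^ p
        ≤ ∫⁻ y in (ball x₀ r)ᶜ, ENNReal.ofReal |f y| ^ p := lintegral_mono_set fun y hy ↦ hy.2
      _ = ∫⁻ y in (ball x₀ r)ᶜ, ENNReal.ofReal (‖y - x₀‖ ^ (-(n + s * p))) :=
          setLIntegral_congr_fun measurableSet_ball.compl fun y hy ↦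
            hf y fun h ↦ hy (h ▸ mem_ball_self hr)
      _ = ENNReal.ofReal (C * r ^ (-(s * p))) := by
          rw [setLIntegral_compl_ball_norm_sub_rpow_neg volume x₀ (by rw [hdim]; nlinarith) hr,
            hdim, sub_add_cancel_left]
  have hscale : ∀ r, 0 < r → r ^ s * (C * r ^ (-(s * p))) ^ (1 / p) = C ^ (1 / p) := by
    intro r hr
    rw [Real.mul_rpow hC (by positivity), ← Real.rpow_mul hr.le, mul_left_comm,
      ← Real.rpow_add hr]
    field_simp
    simp
  refine lt_of_le_of_lt (iSup₂_le fun r (hr : 0 < r) ↦ ?_) (ofReal_lt_top (r := C ^ (1 / p)))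
  calc ENNReal.ofReal (r ^ s) * lpnorm p (Ω \ ball x₀ r) f
      ≤ ENNReal.ofReal (r ^ s) * ENNReal.ofReal (C * r ^ (-(s * p))) ^ (1 / p) := by
        unfold lpnorm
        gcongr
        exact htail r hr
    _ = ENNReal.ofReal (C ^ (1 / p)) := by
        rw [ENNReal.ofReal_rpow_of_nonneg (by positivity) (by positivity),
          ← ENNReal.ofReal_mul (by positivity), hscale r hr]

theorem setLIntegral_norm_sub_rpow_mul_eq_top {Ω : Set (EuclideanSpace ℝ (Fin n))}
    (hΩ : IsOpen Ω) {x₀ : EuclideanSpace ℝ (Fin n)} (hx₀ : x₀ ∈ Ω) {p w : ℝ} (hw : w ≠ 0)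
    (f : EuclideanSpace ℝ (Fin n) → ℝ)
    (hf : ∀ y, y ≠ x₀ → ENNReal.ofReal |f y| ^ p = ENNReal.ofReal (‖y - x₀‖ ^ (-(n + w)))) :
    ∫⁻ y in Ω, ENNReal.ofReal (‖y - x₀‖ ^ w) * ENNReal.ofReal |f y| ^ p = ⊤ := by
  obtain ⟨ε, hε, hball⟩ := isOpen_iff.1 hΩ x₀ hx₀
  have hweight : ∀ y, ENNReal.ofReal (‖y - x₀‖ ^ w) * ENNReal.ofReal |f y| ^ p =
      ENNReal.ofReal (‖y - x₀‖ ^ (-(n : ℝ))) := by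
    intro y
    rcases eq_or_ne y x₀ with rfl | hy
    · have hn : -(n : ℝ) ≠ 0 := by simp [NeZero.ne n]
      rw [sub_self, norm_zero, Real.zero_rpow hw, Real.zero_rpow hn, ofReal_zero, zero_mul]
    · rw [hf y hy, ← ENNReal.ofReal_mul (by positivity),
        ← Real.rpow_add (norm_pos_iff.2 (sub_ne_zero.2 hy))]
      ring_nf
  refine top_le_iff.1 ?_
  calc ⊤ = ∫⁻ y in ball x₀ ε, ENNReal.ofReal (‖y - x₀‖ ^ (-(n : ℝ))) := by
        simpa [finrank_euclideanSpace_fin] using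
          (setLIntegral_ball_norm_sub_rpow_neg_finrank volume x₀ hε).symm
    _ = ∫⁻ y in ball x₀ ε, ENNReal.ofReal (‖y - x₀‖ ^ w) * ENNReal.ofReal |f y| ^ p := by
        simp only [hweight]
    _ ≤ _ := lintegral_mono_set hball

end Euclidean

theorem statement2_general
    (n : ℕ) (hn : 1 ≤ n)
    (Ω : Set (EuclideanSpace ℝ (Fin n))) (hΩo : IsOpen Ω)
    (x₀ : EuclideanSpace ℝ (Fin n)) (hx₀ : x₀ ∈ Ω)
    (p pc : ℝ) (hp : 1 < p) (hpc : pc = p / (p - 1))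
    (lam : ℝ) (hlam0 : 0 < lam)
    (f : EuclideanSpace ℝ (Fin n) → ℝ)
    (hfdef : ∀ x, x ≠ x₀ → f x = ‖x - x₀‖ ^ (-((n : ℝ) / p + lam / pc))) :
    (⨆ r ∈ Ioi (0 : ℝ),
        ENNReal.ofReal (r ^ (lam / pc)) * lpnorm p (Ω \ ball x₀ r) f) < ⊤ ∧
    (∫⁻ y in Ω,
        ENNReal.ofReal (‖y - x₀‖ ^ (lam * (p - 1))) * ENNReal.ofReal |f y| ^ p) = ⊤ := by
  have : NeZero n := ⟨by omega⟩
  have hp0 : 0 < p := zero_lt_one.trans hp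
  have hp1 : 0 < p - 1 := sub_pos.2 hp
  have hpc0 : 0 < pc := hpc ▸ div_pos hp0 hp1
  have hexp : lam / pc * p = lam * (p - 1) := by
    rw [hpc]
    field_simp
  have hfp : ∀ y, y ≠ x₀ →
      ENNReal.ofReal |f y| ^ p = ENNReal.ofReal (‖y - x₀‖ ^ (-(n + lam / pc * p))) := by
    intro y hy
    rw [hfdef y hy, ofReal_abs_rpow_rpow (norm_nonneg _) _ hp0.le]
    field_simp
  refine ⟨iSup_rpow_mul_lpnorm_diff_ball_lt_top Ω x₀ hp0 (by positivity) f hfp,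
    setLIntegral_norm_sub_rpow_mul_eq_top hΩo hx₀ (mul_pos hlam0 hp1).ne' f ?_⟩
  rwa [hexp] at hfp

/-- For `1 < p < ∞` with conjugate exponent `pc = p/(p−1)` and `0 < λ ≤ n`,
the function `f(x) = |x−x₀|^{−n/p − λ/p′}` lies in the local complementary Morrey space
`∁L^{p,λ}_{x₀}(Ω)` (its norm `sup_{r>0} r^{λ/p′}‖f‖_{L^p(Ω∖B(x₀,r))}` is finite), but not
in the weighted Lebesgue space `L^p(Ω, |y−x₀|^{λ(p−1)})` (the weighted integral is infinite).
Hence the embedding of the weighted space into the complementary Morrey space is strict. -/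
theorem statement2
    (n : ℕ) (hn : 1 ≤ n)
    (Ω : Set (EuclideanSpace ℝ (Fin n))) (hΩo : IsOpen Ω) (hΩb : Bornology.IsBounded Ω)
    (x₀ : EuclideanSpace ℝ (Fin n)) (hx₀ : x₀ ∈ Ω)
    (p pc : ℝ) (hp : 1 < p) (hpc : pc = p / (p - 1))
    (lam : ℝ) (hlam0 : 0 < lam) (hlamn : lam ≤ (n : ℝ))
    (f : EuclideanSpace ℝ (Fin n) → ℝ)
    (hfdef : ∀ x, x ≠ x₀ → f x = ‖x - x₀‖ ^ (-((n : ℝ) / p + lam / pc))) :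
    (⨆ r ∈ Ioi (0 : ℝ),
        ENNReal.ofReal (r ^ (lam / pc)) * lpnorm p (Ω \ ball x₀ r) f) < ⊤ ∧
    (∫⁻ y in Ω,
        ENNReal.ofReal (‖y - x₀‖ ^ (lam * (p - 1))) * ENNReal.ofReal |f y| ^ p) = ⊤ :=
  statement2_general n hn Ω hΩo x₀ hx₀ p pc hp hpc lam hlam0 f hfdef
end

section
/- Let n ≥ 1, let Ω ⊂ ℝⁿ be a bounded open set with diameter ℓ, let x₀ ∈ Ω, let 1 ≤ p < ∞ with conjugate exponent p′ = p/(p−1), let 0 ≤ λ ≤ n, let A > ℓ and let B > ℓ·e^e. Define g(x) = ln(ln(B/|x−x₀|)) · |x−x₀|^{−n/p − λ/p′} for x ∈ Ω, x ≠ x₀. Then for every ε > 0 one has ∫_Ω |g(y)|^p |y−x₀|^{λ(p−1)} (ln(A/|y−x₀|))^{−(1+ε)} dy < ∞, while r^{λ/p′} ‖g‖_{L^p(Ω \ B(x₀,r))} → ∞ as r → 0⁺; in particular sup_{r>0} r^{λ/p′} ‖g‖_{L^p(Ω \ B(x₀,r))} = ∞, so g does not lie in the local complementary Morrey space ∁L^{p,λ}_{x₀}(Ω).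 Hence the embedding of ∁L^{p,λ}_{x₀}(Ω) into ⋂_{ε>0} L^p(Ω, |y−x₀|^{λ(p−1)} (ln(A/|y−x₀|))^{−(1+ε)}) is strict. -/
/-!
Write `t = ‖y - x₀‖` and `a = λ (p - 1)`, so that `|g| ^ p = (ln ln (B / t)) ^ p t ^ (-(n + a))`.
The weight cancels `t ^ (-a)`, leaving `(ln ln (B / t)) ^ p t ^ (-n) / (ln (A / t)) ^ (1 + ε)`.
As `(ln ln) ^ p ≲ ln ^ (ε / 2)`, the dyadic shell `ℓ / 2 ^ (k + 1) < t ≤ ℓ / 2 ^ k`, of volume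
`≈ (ℓ / 2 ^ k) ^ n`, contributes `≲ (k + 1) ^ (-(1 + ε / 2))` to the integral: a summable series.
Conversely `|g| ^ p ≥ (ln ln (B / 2r)) ^ p (2r) ^ (-(n + a))` on the annulus `r ≤ t ≤ 2r`, of
volume `≈ r ^ n`, so that `r ^ (λ / p') ‖g‖_{L^p(Ω \ B(x₀, r))} ≳ ln ln (B / 2r) → ∞`.
-/

open MeasureTheory Metric Set ENNReal Filter Topology

open Module (finrank)

theorem exists_mem_Ioc_div_two_pow {R t : ℝ} (ht : 0 < t) (htR : t ≤ R) :
    ∃ k : ℕ, t ∈ Ioc (R / 2 ^ (k + 1)) (R / 2 ^ k) := by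
  obtain ⟨k, hk, hk'⟩ := exists_nat_pow_near ((one_le_div ht).2 htR) (one_lt_two (α := ℝ))
  exact ⟨k, (div_lt_iff₀ (by positivity)).2 (by rwa [div_lt_iff₀ ht, mul_comm] at hk'),
    (le_div_iff₀ (by positivity)).2 (by rwa [le_div_iff₀ ht, mul_comm] at hk)⟩

theorem min_log_mul_le_log_div_div_two_pow {A R : ℝ} (hA : 0 < A) (hR : 0 < R) (k : ℕ) :
    min (Real.log (A / R)) (Real.log 2) * (k + 1) ≤ Real.log (A / (R / 2 ^ k)) := by
  rw [div_div_eq_mul_div, mul_div_right_comm, Real.log_mul (by positivity) (by positivity),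
    Real.log_pow]
  nlinarith [min_le_left (Real.log (A / R)) (Real.log 2),
    min_le_right (Real.log (A / R)) (Real.log 2), (k.cast_nonneg : (0 : ℝ) ≤ k)]

theorem one_lt_log_div {ℓ B t : ℝ} (ht : 0 < t) (htℓ : t ≤ ℓ) (hB : ℓ * Real.exp 1 < B) :
    1 < Real.log (B / t) := by
  rw [Real.lt_log_iff_exp_lt (div_pos (by nlinarith [Real.exp_pos 1]) ht), lt_div_iff₀ ht]
  nlinarith [Real.exp_pos 1]

theorem exists_log_log_rpow_le_mul_log_rpow {ℓ A B p η : ℝ} (hℓ : 0 < ℓ) (hA : ℓ < A)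
    (hB : ℓ * Real.exp 1 < B) (hp : 0 < p) (hη : 0 < η) :
    ∃ C, ∀ t ∈ Ioc 0 ℓ, Real.log (Real.log (B / t)) ^ p ≤ C * Real.log (A / t) ^ η := by
  have hA0 : 0 < A := hℓ.trans hA
  have hB0 : 0 < B := by nlinarith [Real.exp_pos 1]
  set c := Real.log (A / ℓ)
  have hc : 0 < c := Real.log_pos ((one_lt_div hℓ).2 hA)
  set κ := 1 + |Real.log (B / A)| / c
  set s := η / p
  refine ⟨κ ^ η / s ^ p, fun t ⟨ht, htℓ⟩ => ?_⟩
  set u := Real.log (A / t)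
  have hcu : c ≤ u := Real.log_le_log (by positivity) (div_le_div_of_nonneg_left hA0.le ht htℓ)
  have hBt : Real.log (B / t) ≤ κ * u := by
    have hsplit : Real.log (B / t) = Real.log (B / A) + u := by
      rw [← Real.log_mul (by positivity) (by positivity), div_mul_div_cancel₀ hA0.ne']
    have : |Real.log (B / A)| ≤ |Real.log (B / A)| / c * u := by
      rw [div_mul_eq_mul_div, le_div_iff₀ hc]
      exact mul_le_mul_of_nonneg_left hcu (abs_nonneg _)
    rw [hsplit]
    linarith [le_abs_self (Real.log (B / A))]
  have h1 := one_lt_log_div ht htℓ hB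
  calc Real.log (Real.log (B / t)) ^ p
      ≤ (Real.log (B / t) ^ s / s) ^ p :=
        Real.rpow_le_rpow (Real.log_nonneg h1.le)
          (Real.log_le_rpow_div (by linarith) (by positivity)) hp.le
    _ ≤ ((κ * u) ^ s / s) ^ p := by gcongr
    _ = κ ^ η / s ^ p * u ^ η := by
        have hκu : 0 ≤ κ * u := mul_nonneg (by positivity) (hc.le.trans hcu)
        rw [Real.div_rpow (by positivity) (by positivity), ← Real.rpow_mul hκu,
          div_mul_cancel₀ η hp.ne', Real.mul_rpow (by positivity) (by linarith)]
        ring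

theorem rpow_div_rpow_mul_le {t u M C a d ε : ℝ} (ht : 0 < t) (hu : 0 < u)
    (hM : M ≤ C * u ^ (ε / 2)) :
    t ^ a / u ^ (1 + ε) * (M * t ^ (-(d + a))) ≤ C * (t ^ (-d) / u ^ (1 + ε / 2)) := by
  calc t ^ a / u ^ (1 + ε) * (M * t ^ (-(d + a)))
      = M * t ^ (-d) / u ^ (1 + ε) := by
        rw [show -d = a + -(d + a) by ring, Real.rpow_add ht]
        ring
    _ ≤ C * u ^ (ε / 2) * t ^ (-d) / u ^ (1 + ε) := by gcongr
    _ = C * (t ^ (-d) / u ^ (1 + ε / 2)) := by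
        rw [show 1 + ε = ε / 2 + (1 + ε / 2) by ring, Real.rpow_add hu]
        field_simp

theorem ofReal_abs_mul_rpow_neg_rpow {L t c p : ℝ} (hL : 0 ≤ L) (ht : 0 < t) (hp : 0 ≤ p) :
    ENNReal.ofReal |L * t ^ (-c)| ^ p = ENNReal.ofReal (L ^ p * t ^ (-(c * p))) := by
  rw [abs_of_nonneg (by positivity), ENNReal.ofReal_rpow_of_nonneg (by positivity) hp,
    Real.mul_rpow hL (by positivity), ← Real.rpow_mul ht.le, neg_mul]

theorem iSup_Ioi_eq_top_of_tendsto {f : ℝ → ℝ≥0∞} {a : ℝ} (h : Tendsto f (𝓝[>] a) (𝓝 ⊤)) :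
    ⨆ r ∈ Ioi a, f r = ⊤ :=
  top_le_iff.1 <| le_of_tendsto h <|
    eventually_nhdsWithin_of_forall fun r hr => le_iSup₂ (f := fun r _ => f r) r hr

section Shells

variable {E : Type*} [NormedAddCommGroup E] [MeasurableSpace E] [OpensMeasurableSpace E]
  (μ : Measure E) [NullSingletonClass μ]

theorem setLIntegral_closedBall_le_tsum_dyadic (x₀ : E) (R : ℝ) (f : E → ℝ≥0∞)
    (D : ℕ → ℝ≥0∞)
    (hf : ∀ (k : ℕ) (y : E), R / 2 ^ (k + 1) < ‖y - x₀‖ → ‖y - x₀‖ ≤ R / 2 ^ k → f y ≤ D k) :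
    ∫⁻ y in closedBall x₀ R, f y ∂μ ≤ ∑' k, D k * μ (closedBall x₀ (R / 2 ^ k)) := by
  set shell : ℕ → Set E := fun k => closedBall x₀ (R / 2 ^ k) \ closedBall x₀ (R / 2 ^ (k + 1))
  have hcover : closedBall x₀ R ⊆ {x₀} ∪ ⋃ k, shell k := by
    intro y hy
    rcases eq_or_ne y x₀ with rfl | hne
    · exact Or.inl rfl
    obtain ⟨k, hk⟩ := exists_mem_Ioc_div_two_pow (dist_pos.2 hne) (mem_closedBall.1 hy)
    exact Or.inr (mem_iUnion.2 ⟨k, hk.2, fun h => (mem_closedBall.1 h).not_gt hk.1⟩)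
  calc ∫⁻ y in closedBall x₀ R, f y ∂μ
      ≤ ∫⁻ y in ⋃ k, shell k, f y ∂μ := by
        exact lintegral_mono_set' ((LE.le.eventuallyLE hcover).trans
          (union_ae_eq_right_of_ae_eq_empty (ae_eq_empty.2 (measure_singleton x₀))).le)
    _ ≤ ∑' k, ∫⁻ y in shell k, f y ∂μ := lintegral_iUnion_le _ _
    _ ≤ ∑' k, D k * μ (shell k) := by
        refine ENNReal.tsum_le_tsum fun k => ?_
        rw [← setLIntegral_const]
        refine setLIntegral_mono' (measurableSet_closedBall.diff measurableSet_closedBall)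
          fun y ⟨hy, hy'⟩ => hf k y ?_ (mem_closedBall_iff_norm.1 hy)
        exact not_le.1 fun h => hy' (mem_closedBall_iff_norm.2 h)
    _ ≤ ∑' k, D k * μ (closedBall x₀ (R / 2 ^ k)) := by
        gcongr with k
        exact sdiff_subset

end Shells

section AddHaar

variable {E : Type*} [NormedAddCommGroup E] [NormedSpace ℝ E] [FiniteDimensional ℝ E]
  [MeasurableSpace E] [BorelSpace E] [Nontrivial E] (μ : Measure E) [μ.IsAddHaarMeasure]

theorem setLIntegral_closedBall_rpow_neg_finrank_div_log_lt_top (x₀ : E) {R A δ : ℝ}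
    (hR : 0 < R) (hRA : R < A) (hδ : 0 < δ) :
    ∫⁻ y in closedBall x₀ R,
      ENNReal.ofReal (‖y - x₀‖ ^ (-(finrank ℝ E : ℝ)) / Real.log (A / ‖y - x₀‖) ^ (1 + δ)) ∂μ
      < ⊤ := by
  set d : ℝ := (finrank ℝ E : ℝ)
  have hA : 0 < A := hR.trans hRA
  set c := min (Real.log (A / R)) (Real.log 2)
  have hc : 0 < c := lt_min (Real.log_pos ((one_lt_div hR).2 hRA)) (Real.log_pos one_lt_two)
  set D : ℕ → ℝ := fun k => 2 ^ d * (R / 2 ^ k) ^ (-d) / (c * (k + 1)) ^ (1 + δ)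
  have hD (k : ℕ) (y : E) (h₁ : R / 2 ^ (k + 1) < ‖y - x₀‖) (h₂ : ‖y - x₀‖ ≤ R / 2 ^ k) :
      ENNReal.ofReal (‖y - x₀‖ ^ (-d) / Real.log (A / ‖y - x₀‖) ^ (1 + δ))
        ≤ ENNReal.ofReal (D k) := by
    have ht : 0 < ‖y - x₀‖ := lt_trans (by positivity) h₁
    refine ENNReal.ofReal_le_ofReal (div_le_div₀ (by positivity) ?_ (by positivity) ?_)
    · calc ‖y - x₀‖ ^ (-d) ≤ (R / 2 ^ (k + 1)) ^ (-d) :=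
            Real.rpow_le_rpow_of_nonpos (by positivity) h₁.le (by simp [d])
        _ = 2 ^ d * (R / 2 ^ k) ^ (-d) := by
            rw [pow_succ, ← div_div, Real.div_rpow (by positivity) zero_le_two,
              Real.rpow_neg zero_le_two, div_inv_eq_mul, mul_comm]
    · refine Real.rpow_le_rpow (by positivity) ((min_log_mul_le_log_div_div_two_pow hA hR k).trans ?_) (by positivity)
      exact Real.log_le_log (by positivity) (div_le_div_of_nonneg_left (by linarith) ht h₂)
  have hsum : Summable fun k : ℕ => 2 ^ d * c ^ (-(1 + δ)) * ((k : ℝ) + 1) ^ (-(1 + δ)) := by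
    refine Summable.mul_left _ ?_
    have := (summable_nat_add_iff 1).2 (Real.summable_nat_rpow.2 (by linarith : -(1 + δ) < -1))
    exact_mod_cast this
  calc ∫⁻ y in closedBall x₀ R,
        ENNReal.ofReal (‖y - x₀‖ ^ (-d) / Real.log (A / ‖y - x₀‖) ^ (1 + δ)) ∂μ
      ≤ ∑' k, ENNReal.ofReal (D k) * μ (closedBall x₀ (R / 2 ^ k)) :=
        setLIntegral_closedBall_le_tsum_dyadic μ x₀ R _ _ hD
    _ = ∑' k : ℕ, ENNReal.ofReal (2 ^ d * c ^ (-(1 + δ)) * ((k : ℝ) + 1) ^ (-(1 + δ)))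
          * μ (ball 0 1) := by
        congr 1 with k
        rw [Measure.addHaar_closedBall μ _ (by positivity), ← mul_assoc,
          ← ENNReal.ofReal_mul (by positivity)]
        congr 2
        simp only [D]
        have hρ : (0 : ℝ) < R / 2 ^ k := by positivity
        rw [Real.mul_rpow hc.le (by positivity), Real.rpow_neg hc.le, Real.rpow_neg hρ.le,
          Real.rpow_neg (by positivity), ← Real.rpow_natCast (R / 2 ^ k)]
        field_simp
        rfl
    _ < ⊤ := by
        rw [ENNReal.tsum_mul_right]
        exact ENNReal.mul_lt_top hsum.tsum_ofReal_lt_top measure_ball_lt_top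

theorem MeasureTheory.Measure.addHaar_closedBall_diff_ball (x : E) {r R : ℝ} (hr : 0 ≤ r)
    (hrR : r ≤ R) :
    μ (closedBall x R \ ball x r) =
      ENNReal.ofReal (R ^ finrank ℝ E - r ^ finrank ℝ E) * μ (ball 0 1) := by
  rw [measure_sdiff (ball_subset_closedBall.trans (closedBall_subset_closedBall hrR))
      measurableSet_ball.nullMeasurableSet measure_ball_lt_top.ne,
    Measure.addHaar_closedBall μ x (hr.trans hrR), Measure.addHaar_ball μ x hr,
    ← ENNReal.sub_mul fun _ _ => measure_ball_lt_top.ne, ENNReal.ofReal_sub _ (by positivity)]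

end AddHaar

section LogLogSingularity

variable {E : Type*} [NormedAddCommGroup E] [NormedSpace ℝ E] [FiniteDimensional ℝ E]
  [MeasurableSpace E] [BorelSpace E] [Nontrivial E] (μ : Measure E) [μ.IsAddHaarMeasure]
  {Ω : Set E} {x₀ : E} {g : E → ℝ} {ℓ A B p a : ℝ}

theorem setLIntegral_weight_mul_rpow_lt_top (hΩ : Ω ⊆ closedBall x₀ ℓ) (hℓ : 0 < ℓ)
    (hA : ℓ < A) (hB : ℓ * Real.exp 1 < B) (hp : 0 < p)
    (hg : ∀ y, y ≠ x₀ → ‖y - x₀‖ ≤ ℓ → ENNReal.ofReal |g y| ^ p = ENNReal.ofReal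
      (Real.log (Real.log (B / ‖y - x₀‖)) ^ p * ‖y - x₀‖ ^ (-((finrank ℝ E : ℝ) + a))))
    {ε : ℝ} (hε : 0 < ε) :
    ∫⁻ y in Ω, ENNReal.ofReal (‖y - x₀‖ ^ a / Real.log (A / ‖y - x₀‖) ^ (1 + ε)) *
      ENNReal.ofReal |g y| ^ p ∂μ < ⊤ := by
  set d : ℝ := (finrank ℝ E : ℝ)
  obtain ⟨C, hC⟩ := exists_log_log_rpow_le_mul_log_rpow hℓ hA hB hp (half_pos hε)
  have hpt : ∀ y, y ≠ x₀ → ‖y - x₀‖ ≤ ℓ →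
      ENNReal.ofReal (‖y - x₀‖ ^ a / Real.log (A / ‖y - x₀‖) ^ (1 + ε)) *
        ENNReal.ofReal |g y| ^ p ≤ ENNReal.ofReal C *
          ENNReal.ofReal (‖y - x₀‖ ^ (-d) / Real.log (A / ‖y - x₀‖) ^ (1 + ε / 2)) := by
    intro y hne htℓ
    have ht : 0 < ‖y - x₀‖ := norm_pos_iff.2 (sub_ne_zero.2 hne)
    have hu : 0 < Real.log (A / ‖y - x₀‖) := Real.log_pos ((one_lt_div ht).2 (htℓ.trans_lt hA))
    rw [hg y hne htℓ, ← ENNReal.ofReal_mul (by positivity), ← ENNReal.ofReal_mul' (by positivity)]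
    exact ENNReal.ofReal_le_ofReal (rpow_div_rpow_mul_le ht hu (hC _ ⟨ht, htℓ⟩))
  calc ∫⁻ y in Ω, ENNReal.ofReal (‖y - x₀‖ ^ a / Real.log (A / ‖y - x₀‖) ^ (1 + ε)) *
        ENNReal.ofReal |g y| ^ p ∂μ
      ≤ ∫⁻ y in closedBall x₀ ℓ, ENNReal.ofReal (‖y - x₀‖ ^ a /
          Real.log (A / ‖y - x₀‖) ^ (1 + ε)) * ENNReal.ofReal |g y| ^ p ∂μ :=
        lintegral_mono_set hΩ
    _ ≤ ∫⁻ y in closedBall x₀ ℓ, ENNReal.ofReal C *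
          ENNReal.ofReal (‖y - x₀‖ ^ (-d) / Real.log (A / ‖y - x₀‖) ^ (1 + ε / 2)) ∂μ := by
        refine lintegral_mono_ae ?_
        filter_upwards [ae_restrict_mem measurableSet_closedBall,
          ae_restrict_of_ae (compl_mem_ae_iff.2 (measure_singleton x₀))] with y hyℓ hne
        exact hpt y hne (mem_closedBall_iff_norm.1 hyℓ)
    _ < ⊤ := by
        rw [lintegral_const_mul' _ _ ENNReal.ofReal_ne_top]
        exact ENNReal.mul_lt_top ENNReal.ofReal_lt_top
          (setLIntegral_closedBall_rpow_neg_finrank_div_log_lt_top μ x₀ hℓ hA (half_pos hε))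

theorem log_log_rpow_mul_measure_ball_le_setLIntegral_compl_ball {r : ℝ}
    (hΩ : closedBall x₀ (2 * r) ⊆ Ω) (hr : 0 < r) (hrℓ : 2 * r ≤ ℓ) (hB : ℓ * Real.exp 1 < B)
    (hp : 0 < p) (ha : 0 ≤ a)
    (hg : ∀ y, y ≠ x₀ → ‖y - x₀‖ ≤ ℓ → ENNReal.ofReal |g y| ^ p = ENNReal.ofReal
      (Real.log (Real.log (B / ‖y - x₀‖)) ^ p * ‖y - x₀‖ ^ (-((finrank ℝ E : ℝ) + a)))) :
    ENNReal.ofReal (2 ^ (-((finrank ℝ E : ℝ) + a)) * (2 ^ finrank ℝ E - 1) *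
        Real.log (Real.log (B / (2 * r))) ^ p) * μ (ball 0 1)
      ≤ ENNReal.ofReal (r ^ a) * ∫⁻ y in Ω \ ball x₀ r, ENNReal.ofReal |g y| ^ p ∂μ := by
  set d : ℝ := (finrank ℝ E : ℝ)
  set L := Real.log (Real.log (B / (2 * r)))
  have hB0 : 0 < B := lt_trans (mul_pos (by linarith) (Real.exp_pos 1)) hB
  have hL : 0 ≤ L := Real.log_nonneg (one_lt_log_div (by positivity) hrℓ hB).le
  set m := L ^ p * (2 * r) ^ (-(d + a))
  have hm : ∀ y ∈ closedBall x₀ (2 * r) \ ball x₀ r,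
      ENNReal.ofReal m ≤ ENNReal.ofReal |g y| ^ p := by
    rintro y ⟨hy2r, hyr⟩
    have hy2r : ‖y - x₀‖ ≤ 2 * r := mem_closedBall_iff_norm.1 hy2r
    have ht : 0 < ‖y - x₀‖ := hr.trans_le (not_lt.1 fun h => hyr (mem_ball_iff_norm.2 h))
    rw [hg y (sub_ne_zero.1 (norm_pos_iff.1 ht)) (hy2r.trans hrℓ)]
    have hLy : L ≤ Real.log (Real.log (B / ‖y - x₀‖)) :=
      Real.log_le_log (zero_lt_one.trans (one_lt_log_div (by positivity) hrℓ hB))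
        (Real.log_le_log (by positivity) (div_le_div_of_nonneg_left hB0.le ht hy2r))
    refine ENNReal.ofReal_le_ofReal (mul_le_mul (Real.rpow_le_rpow hL hLy hp.le) ?_
      (by positivity) (Real.rpow_nonneg (hL.trans hLy) _))
    exact Real.rpow_le_rpow_of_nonpos ht hy2r (by simp only [d]; linarith)
  have hannulus : ∫⁻ y in closedBall x₀ (2 * r) \ ball x₀ r, ENNReal.ofReal m ∂μ
      ≤ ∫⁻ y in Ω \ ball x₀ r, ENNReal.ofReal |g y| ^ p ∂μ :=
    (setLIntegral_mono' (measurableSet_closedBall.diff measurableSet_ball) hm).trans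
      (lintegral_mono_set (sdiff_subset_sdiff_left hΩ))
  calc ENNReal.ofReal (2 ^ (-(d + a)) * (2 ^ finrank ℝ E - 1) * L ^ p) * μ (ball 0 1)
      = ENNReal.ofReal (r ^ a) * (ENNReal.ofReal m *
          (ENNReal.ofReal ((2 * r) ^ finrank ℝ E - r ^ finrank ℝ E) * μ (ball 0 1))) := by
        rw [← mul_assoc, ← mul_assoc, ← ENNReal.ofReal_mul (by positivity),
          ← ENNReal.ofReal_mul (by positivity)]
        congr 2
        simp only [m]
        rw [Real.mul_rpow zero_le_two hr.le, mul_pow, ← Real.rpow_natCast r,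
          show (-(d + a)) = -a + -d by ring, Real.rpow_add hr, Real.rpow_neg hr.le a,
          Real.rpow_neg hr.le d]
        field_simp
        ring
    _ = ENNReal.ofReal (r ^ a) *
          ∫⁻ y in closedBall x₀ (2 * r) \ ball x₀ r, ENNReal.ofReal m ∂μ := by
        rw [setLIntegral_const, μ.addHaar_closedBall_diff_ball x₀ hr.le (by linarith)]
    _ ≤ _ := by gcongr

theorem tendsto_rpow_mul_setLIntegral_compl_ball_rpow {δ : ℝ} (hδ : 0 < δ)
    (hball : ball x₀ δ ⊆ Ω) (hℓ : 0 < ℓ) (hB : ℓ * Real.exp 1 < B) (hp : 0 < p) (ha : 0 ≤ a)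
    (hg : ∀ y, y ≠ x₀ → ‖y - x₀‖ ≤ ℓ → ENNReal.ofReal |g y| ^ p = ENNReal.ofReal
      (Real.log (Real.log (B / ‖y - x₀‖)) ^ p * ‖y - x₀‖ ^ (-((finrank ℝ E : ℝ) + a)))) :
    Tendsto (fun r : ℝ => ENNReal.ofReal (r ^ (a / p)) *
        (∫⁻ y in Ω \ ball x₀ r, ENNReal.ofReal |g y| ^ p ∂μ) ^ (1 / p))
      (𝓝[>] 0) (𝓝 ⊤) := by
  set κ : ℝ := 2 ^ (-((finrank ℝ E : ℝ) + a)) * (2 ^ finrank ℝ E - 1)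
  have hκ : 0 < κ := mul_pos (by positivity)
    (sub_pos.2 (one_lt_pow₀ (by norm_num : (1 : ℝ) < 2) Module.finrank_pos.ne'))
  have hB0 : 0 < B := lt_trans (mul_pos hℓ (Real.exp_pos 1)) hB
  have hLL : Tendsto (fun r : ℝ => Real.log (Real.log (B / (2 * r)))) (𝓝[>] 0) atTop := by
    refine Real.tendsto_log_atTop.comp (Real.tendsto_log_atTop.comp ?_)
    exact (tendsto_inv_nhdsGT_zero.const_mul_atTop (half_pos hB0)).congr fun r => by ring
  have hlower : Tendsto (fun r : ℝ => ENNReal.ofReal (κ * Real.log (Real.log (B / (2 * r))) ^ p) *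
      μ (ball 0 1)) (𝓝[>] 0) (𝓝 ⊤) := by
    have := ENNReal.tendsto_ofReal_atTop.comp
      (((tendsto_rpow_atTop hp).comp hLL).const_mul_atTop hκ)
    simpa [ENNReal.top_mul (measure_ball_pos μ (0 : E) one_pos).ne'] using
      ENNReal.Tendsto.mul_const (b := μ (ball 0 1)) this (Or.inr measure_ball_lt_top.ne)
  have hpow : Tendsto (fun r : ℝ =>
      ENNReal.ofReal (r ^ a) * ∫⁻ y in Ω \ ball x₀ r, ENNReal.ofReal |g y| ^ p ∂μ)
      (𝓝[>] 0) (𝓝 ⊤) := by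
    refine tendsto_nhds_top_mono hlower ?_
    filter_upwards [Ioo_mem_nhdsGT (lt_min (half_pos hδ) (half_pos hℓ))] with r ⟨hr, hrδℓ⟩
    refine log_log_rpow_mul_measure_ball_le_setLIntegral_compl_ball μ
      ((closedBall_subset_ball ?_).trans hball) hr ?_ hB hp ha hg
    · linarith [min_le_left (δ / 2) (ℓ / 2)]
    · linarith [min_le_right (δ / 2) (ℓ / 2)]
  have hroot := ((ENNReal.continuous_rpow_const (y := 1 / p)).tendsto ⊤).comp hpow
  rw [ENNReal.top_rpow_of_pos (by positivity)] at hroot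
  refine hroot.congr' ?_
  filter_upwards [self_mem_nhdsWithin] with r (hr : 0 < r)
  rw [Function.comp_apply, ENNReal.mul_rpow_of_nonneg _ _ (by positivity),
    ENNReal.ofReal_rpow_of_nonneg (by positivity) (by positivity), ← Real.rpow_mul hr.le,
    mul_one_div]

end LogLogSingularity

theorem statement3_general
    (n : ℕ) (hn : 1 ≤ n)
    (Ω : Set (EuclideanSpace ℝ (Fin n))) (hΩo : IsOpen Ω) (hΩb : Bornology.IsBounded Ω)
    (x₀ : EuclideanSpace ℝ (Fin n)) (hx₀ : x₀ ∈ Ω)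
    (p pc : ℝ) (hp : 1 ≤ p) (hpc : pc = p / (p - 1))
    (lam : ℝ) (hlam0 : 0 ≤ lam)
    (ℓ : ℝ) (hℓ : ℓ = Metric.diam Ω)
    (A : ℝ) (hA : ℓ < A)
    (B : ℝ) (hB : ℓ * Real.exp (Real.exp 1) < B)
    (g : EuclideanSpace ℝ (Fin n) → ℝ)
    (hgdef : ∀ x, x ≠ x₀ →
      g x = Real.log (Real.log (B / ‖x - x₀‖)) * ‖x - x₀‖ ^ (-((n : ℝ) / p + lam / pc))) :
    (∀ ε > (0 : ℝ),
      (∫⁻ y in Ω,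
          ENNReal.ofReal
              (‖y - x₀‖ ^ (lam * (p - 1)) / Real.log (A / ‖y - x₀‖) ^ (1 + ε)) *
            ENNReal.ofReal |g y| ^ p) < ⊤) ∧
    Tendsto (fun r : ℝ =>
        ENNReal.ofReal (r ^ (lam / pc)) * lpnorm p (Ω \ ball x₀ r) g)
      (𝓝[>] (0 : ℝ)) (𝓝 ⊤) ∧
    (⨆ r ∈ Ioi (0 : ℝ),
        ENNReal.ofReal (r ^ (lam / pc)) * lpnorm p (Ω \ ball x₀ r) g) = ⊤ := by
  have : Nonempty (Fin n) := ⟨⟨0, hn⟩⟩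
  obtain ⟨δ, hδ, hball⟩ := Metric.isOpen_iff.1 hΩo x₀ hx₀
  have hℓ0 : 0 < ℓ := hℓ ▸ (by positivity : (0 : ℝ) < 2 * δ).trans_le
    ((diam_ball_eq x₀ hδ.le).symm.le.trans (diam_mono hball hΩb))
  have hΩℓ : Ω ⊆ closedBall x₀ ℓ := fun y hy => hℓ ▸ dist_le_diam_of_mem hΩb hy hx₀
  have hB' : ℓ * Real.exp 1 < B :=
    lt_of_le_of_lt (by gcongr; exact Real.one_le_exp zero_le_one) hB
  have hp0 : 0 < p := by linarith
  -- also for `p = 1`, where `pc = 1 / 0 = 0` and both sides vanish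
  have hpc' : lam / pc = lam * (p - 1) / p := by rw [hpc, div_div_eq_mul_div]
  have hg (y) (hy : y ≠ x₀) (hyℓ : ‖y - x₀‖ ≤ ℓ) : ENNReal.ofReal |g y| ^ p = ENNReal.ofReal
      (Real.log (Real.log (B / ‖y - x₀‖)) ^ p *
        ‖y - x₀‖ ^ (-((finrank ℝ (EuclideanSpace ℝ (Fin n)) : ℝ) + lam * (p - 1)))) := by
    have ht : 0 < ‖y - x₀‖ := norm_pos_iff.2 (sub_ne_zero.2 hy)
    rw [hgdef y hy, ofReal_abs_mul_rpow_neg_rpow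
      (Real.log_nonneg (one_lt_log_div ht hyℓ hB').le) ht hp0.le, finrank_euclideanSpace_fin,
      hpc']
    field_simp
  have htendsto := tendsto_rpow_mul_setLIntegral_compl_ball_rpow volume hδ hball hℓ0 hB' hp0
    (mul_nonneg hlam0 (by linarith)) hg
  rw [← hpc'] at htendsto
  exact ⟨fun ε hε => setLIntegral_weight_mul_rpow_lt_top volume hΩℓ hℓ0 hA hB' hp0 hg hε,
    htendsto, iSup_Ioi_eq_top_of_tendsto htendsto⟩

/-- For a bounded open `Ω ⊆ ℝⁿ` of diameter `ℓ`, `x₀ ∈ Ω`, `1 ≤ p < ∞` with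
conjugate exponent `pc = p/(p−1)`, `0 ≤ λ ≤ n`, `A > ℓ` and `B > ℓ·e^e`, the function
`g(x) = ln(ln(B/|x−x₀|)) · |x−x₀|^{−n/p − λ/p′}` lies in every weighted space
`L^p(Ω, |y−x₀|^{λ(p−1)} (ln(A/|y−x₀|))^{−(1+ε)})`, `ε > 0`, while
`r^{λ/p′}‖g‖_{L^p(Ω∖B(x₀,r))} → ∞` as `r → 0⁺`; in particular the complementary Morrey
norm of `g` is infinite, so the right-hand embedding of Theorem 2.1 is strict. -/
theorem statement3
    (n : ℕ) (hn : 1 ≤ n)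
    (Ω : Set (EuclideanSpace ℝ (Fin n))) (hΩo : IsOpen Ω) (hΩb : Bornology.IsBounded Ω)
    (x₀ : EuclideanSpace ℝ (Fin n)) (hx₀ : x₀ ∈ Ω)
    (p pc : ℝ) (hp : 1 ≤ p) (hpc : pc = p / (p - 1))
    (lam : ℝ) (hlam0 : 0 ≤ lam) (hlamn : lam ≤ (n : ℝ))
    (ℓ : ℝ) (hℓ : ℓ = Metric.diam Ω)
    (A : ℝ) (hA : ℓ < A)
    (B : ℝ) (hB : ℓ * Real.exp (Real.exp 1) < B)
    (g : EuclideanSpace ℝ (Fin n) → ℝ)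
    (hgdef : ∀ x, x ≠ x₀ →
      g x = Real.log (Real.log (B / ‖x - x₀‖)) * ‖x - x₀‖ ^ (-((n : ℝ) / p + lam / pc))) :
    (∀ ε > (0 : ℝ),
      (∫⁻ y in Ω,
          ENNReal.ofReal
              (‖y - x₀‖ ^ (lam * (p - 1)) / Real.log (A / ‖y - x₀‖) ^ (1 + ε)) *
            ENNReal.ofReal |g y| ^ p) < ⊤) ∧
    Tendsto (fun r : ℝ =>
        ENNReal.ofReal (r ^ (lam / pc)) * lpnorm p (Ω \ ball x₀ r) g)
      (𝓝[>] (0 : ℝ)) (𝓝 ⊤) ∧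
    (⨆ r ∈ Ioi (0 : ℝ),
        ENNReal.ofReal (r ^ (lam / pc)) * lpnorm p (Ω \ ball x₀ r) g) = ⊤ :=
  statement3_general n hn Ω hΩo hΩb x₀ hx₀ p pc hp hpc lam hlam0 ℓ hℓ A hA B hB g hgdef
end

section
/- Let n ≥ 1, let Ω ⊂ ℝⁿ be a bounded open set, let x₀ ∈ Ω, let 1 ≤ p < ∞ with conjugate exponent p′ = p/(p−1), and let ω : (0,∞) → (0,∞) be measurable. Let ρ : (0,∞) → (0,∞) be an increasing function such that c := inf_{r>0} ρ(r) ω(r)^p / r^{n(p−1)} > 0. Then for every measurable f : Ω → ℝ, sup_{r>0} (r^{n/p′}/ω(r)) ‖f‖_{L^p(Ω \ B(x₀,r))} ≤ c^{−1/p} (∫_Ω ρ(|y−x₀|) |f(y)|^p dy)^{1/p}. That is, the weighted Lebesgue space L^p(Ω, ρ(|·−x₀|)) embeds into the local complementary generalized Morrey space ∁M^{p,ω}_{x₀}(Ω). -/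
/-! Fix `r > 0`. On `Ω \ B(x₀, r)` the weight satisfies `ρ(|y - x₀|) ≥ ρ(r)` by monotonicity, so
`ρ(r) ∫_{Ω \ B(x₀,r)} |f|^p ≤ ∫_Ω ρ(|y - x₀|) |f|^p`. Since `(r^{n/p′})^p = r^{n(p-1)}`, the
definition of `c` gives `(r^{n/p′}/ω(r))^p ≤ c⁻¹ ρ(r)`; combining the two and taking `p`-th roots
bounds each term of the supremum. -/

open MeasureTheory Metric Set ENNReal Filter Topology

theorem ofReal_mul_setLIntegral_diff_ball_le {E : Type*} [SeminormedAddCommGroup E]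
    [MeasurableSpace E] [OpensMeasurableSpace E] (μ : Measure E) {s : Set E}
    (hs : MeasurableSet s) (x₀ : E) {ρ : ℝ → ℝ} {r : ℝ} (hρ : MonotoneOn ρ (Ici r))
    (g : E → ℝ≥0∞) :
    ENNReal.ofReal (ρ r) * ∫⁻ y in s \ ball x₀ r, g y ∂μ ≤
      ∫⁻ y in s, ENNReal.ofReal (ρ ‖y - x₀‖) * g y ∂μ := by
  rw [← lintegral_const_mul' _ _ ofReal_ne_top]
  calc ∫⁻ y in s \ ball x₀ r, ENNReal.ofReal (ρ r) * g y ∂μ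
      ≤ ∫⁻ y in s \ ball x₀ r, ENNReal.ofReal (ρ ‖y - x₀‖) * g y ∂μ := by
        refine setLIntegral_mono' (hs.diff measurableSet_ball) fun y hy => ?_
        have hry : r ≤ ‖y - x₀‖ := by simpa [dist_eq_norm] using hy.2
        gcongr
        exact hρ self_mem_Ici hry hry
    _ ≤ ∫⁻ y in s, ENNReal.ofReal (ρ ‖y - x₀‖) * g y ∂μ := lintegral_mono_set sdiff_subset

theorem ENNReal.mul_rpow_one_div_le_of_rpow_mul_le {p : ℝ} (hp : 0 < p) {a b x y : ℝ≥0∞}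
    (h : a ^ p * x ≤ b ^ p * y) : a * x ^ (1 / p) ≤ b * y ^ (1 / p) := by
  have hroot : ∀ u v : ℝ≥0∞, (u ^ p * v) ^ (1 / p) = u * v ^ (1 / p) := fun u v => by
    rw [mul_rpow_of_nonneg _ _ (by positivity), one_div, rpow_rpow_inv hp.ne']
  rw [← hroot, ← hroot]
  exact rpow_le_rpow h (by positivity)

/-- `p′ = p / (p - 1)` is read literally: at `p = 1` it is `0` and `d / p′ = 0 = d (p - 1) / p`. -/
theorem rpow_div_conjExponent_div_rpow_le {d p r w ρ c : ℝ} (hp : 0 < p) (hr : 0 < r)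
    (hw : 0 < w) (hc : 0 < c) (hcr : c ≤ ρ * w ^ p / r ^ (d * (p - 1))) :
    (r ^ (d / (p / (p - 1))) / w) ^ p ≤ (c ^ (-(1 / p))) ^ p * ρ := by
  have hrpow : (r ^ (d / (p / (p - 1)))) ^ p = r ^ (d * (p - 1)) := by
    rw [← Real.rpow_mul hr.le, div_div_eq_mul_div, div_mul_cancel₀ _ hp.ne']
  have hcpow : (c ^ (-(1 / p))) ^ p = c⁻¹ := by
    rw [← Real.rpow_mul hc.le, neg_mul, one_div_mul_cancel hp.ne', Real.rpow_neg_one]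
  have hwp : 0 < w ^ p := Real.rpow_pos_of_pos hw p
  have hrp : 0 < r ^ (d * (p - 1)) := Real.rpow_pos_of_pos hr _
  rw [Real.div_rpow (by positivity) hw.le, hrpow, hcpow, div_le_iff₀ hwp, inv_mul_eq_div,
    div_mul_eq_mul_div, le_div_iff₀ hc]
  rwa [le_div_iff₀ hrp, mul_comm] at hcr

theorem statement5_general
    (n : ℕ)
    (Ω : Set (EuclideanSpace ℝ (Fin n))) (hΩo : IsOpen Ω)
    (x₀ : EuclideanSpace ℝ (Fin n))
    (p pc : ℝ) (hp : 1 ≤ p) (hpc : pc = p / (p - 1))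
    (ω : ℝ → ℝ) (hωpos : ∀ r > (0 : ℝ), 0 < ω r)
    (ρ : ℝ → ℝ) (hρmono : MonotoneOn ρ (Ioi (0 : ℝ)))
    (c : ℝ) (hc : 0 < c)
    (hcinf : ∀ r > (0 : ℝ), c ≤ ρ r * ω r ^ p / r ^ ((n : ℝ) * (p - 1)))
    (f : EuclideanSpace ℝ (Fin n) → ℝ) :
    (⨆ r ∈ Ioi (0 : ℝ),
        ENNReal.ofReal (r ^ ((n : ℝ) / pc) / ω r) * lpnorm p (Ω \ ball x₀ r) f) ≤
      ENNReal.ofReal (c ^ (-(1 / p))) *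
        (∫⁻ y in Ω,
            ENNReal.ofReal (ρ ‖y - x₀‖) * ENNReal.ofReal |f y| ^ p) ^ (1 / p) := by
  have hp0 : 0 < p := zero_lt_one.trans_le hp
  refine iSup₂_le fun r (hr : 0 < r) => ?_
  subst hpc
  have hweight := rpow_div_conjExponent_div_rpow_le hp0 hr (hωpos r hr) hc (hcinf r hr)
  have hmass := ofReal_mul_setLIntegral_diff_ball_le volume hΩo.measurableSet x₀
    (hρmono.mono (Ici_subset_Ioi.2 hr)) fun y => ENNReal.ofReal |f y| ^ p
  rw [lpnorm]
  refine ENNReal.mul_rpow_one_div_le_of_rpow_mul_le hp0 ?_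
  have hbase : 0 ≤ r ^ ((n : ℝ) / (p / (p - 1))) / ω r :=
    div_nonneg (Real.rpow_nonneg hr.le _) (hωpos r hr).le
  rw [ofReal_rpow_of_nonneg hbase hp0.le, ofReal_rpow_of_nonneg (by positivity) hp0.le]
  calc ENNReal.ofReal ((r ^ ((n : ℝ) / (p / (p - 1))) / ω r) ^ p) *
        ∫⁻ y in Ω \ ball x₀ r, ENNReal.ofReal |f y| ^ p
      ≤ ENNReal.ofReal ((c ^ (-(1 / p))) ^ p * ρ r) *
        ∫⁻ y in Ω \ ball x₀ r, ENNReal.ofReal |f y| ^ p :=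
        mul_le_mul_left (ofReal_le_ofReal hweight) _
    _ ≤ _ := by
      rw [ofReal_mul (by positivity), mul_assoc]
      exact mul_le_mul_right hmass _

/-- For a bounded open `Ω ⊆ ℝⁿ`, `x₀ ∈ Ω`, `1 ≤ p < ∞` with conjugate
exponent `pc = p/(p−1)`, a positive measurable `ω` and an increasing positive `ρ` on
`(0,∞)` with `c := inf_{r>0} ρ(r)ω(r)^p/r^{n(p−1)} > 0`, one has for every measurable `f`:
`sup_{r>0} (r^{n/p′}/ω(r)) ‖f‖_{L^p(Ω∖B(x₀,r))} ≤ c^{−1/p} (∫_Ω ρ(|y−x₀|)|f(y)|^p dy)^{1/p}`,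
i.e. `L^p(Ω, ρ(|·−x₀|))` embeds into `∁M^{p,ω}_{x₀}(Ω)`. -/
theorem statement5
    (n : ℕ) (hn : 1 ≤ n)
    (Ω : Set (EuclideanSpace ℝ (Fin n))) (hΩo : IsOpen Ω) (hΩb : Bornology.IsBounded Ω)
    (x₀ : EuclideanSpace ℝ (Fin n)) (hx₀ : x₀ ∈ Ω)
    (p pc : ℝ) (hp : 1 ≤ p) (hpc : pc = p / (p - 1))
    (ω : ℝ → ℝ) (hωmeas : Measurable ω) (hωpos : ∀ r > (0 : ℝ), 0 < ω r)
    (ρ : ℝ → ℝ) (hρpos : ∀ r > (0 : ℝ), 0 < ρ r) (hρmono : MonotoneOn ρ (Ioi (0 : ℝ)))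
    (c : ℝ) (hc : 0 < c)
    (hcinf : ∀ r > (0 : ℝ), c ≤ ρ r * ω r ^ p / r ^ ((n : ℝ) * (p - 1)))
    (f : EuclideanSpace ℝ (Fin n) → ℝ) (hf : Measurable f) :
    (⨆ r ∈ Ioi (0 : ℝ),
        ENNReal.ofReal (r ^ ((n : ℝ) / pc) / ω r) * lpnorm p (Ω \ ball x₀ r) f) ≤
      ENNReal.ofReal (c ^ (-(1 / p))) *
        (∫⁻ y in Ω,
            ENNReal.ofReal (ρ ‖y - x₀‖) * ENNReal.ofReal |f y| ^ p) ^ (1 / p) :=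
  statement5_general n Ω hΩo x₀ p pc hp hpc ω hωpos ρ hρmono c hc hcinf f
end

section
/- Let n ≥ 1, let Ω ⊂ ℝⁿ be a bounded open set with diameter ℓ, let x₀ ∈ Ω, let 1 < p < ∞ with conjugate exponent p′ = p/(p−1), and let γ ∈ ℝ. Then there exists a constant C > 0, depending only on n, p, γ and ℓ (in particular not on f, t, or x₀), such that for every measurable f : Ω → ℝ satisfying ‖f‖_{L^p(Ω \ B(x₀,s))} < ∞ for every s ∈ (0,ℓ), and for every t ∈ (0,ℓ), ∫_{Ω ∩ B(x₀,t)} |y−x₀|^γ |f(y)| dy ≤ C ∫_0^t s^{γ + n/p′ − 1} ‖f‖_{L^p(Ω \ B(x₀,s))} ds. -/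
/-!
For `y ≠ x₀` with `r = ‖y - x₀‖` one has `log 2 = ∫_{r/2}^{r} ds / s`, so by Tonelli
`log 2 · ∫_{Ω ∩ B(x₀,t)} |y - x₀|^γ |f|` equals `∫₀ᵗ s⁻¹ ∫_{A_s} |y - x₀|^γ |f| ds`, where
`A_s = {y ∈ Ω ∩ B(x₀,t) | s < |y - x₀| < 2s}`. On `A_s` the weight is at most
`max 1 2^γ · s^γ`, and since `A_s ⊆ Ω \ B(x₀,s)` and `A_s ⊆ B(x₀,2s)`, Hölder's inequality
bounds `∫_{A_s} |f|` by `‖f‖_{L^p(Ω \ B(x₀,s))} · |B(x₀,2s)|^{1/p′}`, and `|B(x₀,2s)|^{1/p′}`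
is a multiple of `s^{n/p′}`.
-/

open MeasureTheory Metric Set ENNReal Filter Topology

open Module

theorem lintegral_Ioo_ofReal_inv {a b : ℝ} (ha : 0 < a) (hab : a ≤ b) :
    ∫⁻ s in Ioo a b, ENNReal.ofReal s⁻¹ = ENNReal.ofReal (Real.log (b / a)) := by
  have hinv : IntegrableOn (fun s : ℝ => s⁻¹) (Ioc a b) :=
    (intervalIntegrable_iff_integrableOn_Ioc_of_le hab).1 <|
      intervalIntegral.intervalIntegrable_inv
        (fun x hx => (ha.trans_le (by simpa [hab] using hx.1)).ne') continuousOn_id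
  rw [setLIntegral_congr Ioo_ae_eq_Ioc, ← ofReal_integral_eq_lintegral_ofReal hinv
    ((ae_restrict_mem measurableSet_Ioc).mono fun s hs => inv_nonneg.2 (ha.trans hs.1).le),
    ← intervalIntegral.integral_of_le hab, integral_inv_of_pos ha (ha.trans_le hab)]

theorem rpow_le_max_one_two_rpow_mul_rpow {r s : ℝ} (hs : 0 < s) (hsr : s ≤ r) (hr : r ≤ 2 * s)
    (γ : ℝ) : r ^ γ ≤ max 1 (2 ^ γ) * s ^ γ := by
  rcases le_or_gt 0 γ with hγ | hγ
  · calc r ^ γ ≤ (2 * s) ^ γ := Real.rpow_le_rpow (hs.le.trans hsr) hr hγ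
      _ = 2 ^ γ * s ^ γ := Real.mul_rpow zero_le_two hs.le
      _ ≤ max 1 (2 ^ γ) * s ^ γ := by gcongr; exact le_max_right _ _
  · calc r ^ γ ≤ s ^ γ := Real.rpow_le_rpow_of_nonpos hs hsr hγ.le
      _ ≤ max 1 (2 ^ γ) * s ^ γ := le_mul_of_one_le_left (by positivity) (le_max_left _ _)

theorem setLIntegral_le_lintegral_rpow_mul_measure_rpow {α : Type*} [MeasurableSpace α]
    (μ : Measure α) {p q : ℝ} (hpq : p.HolderConjugate q) {g : α → ℝ≥0∞} (A : Set α)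
    (hg : AEMeasurable g (μ.restrict A)) :
    ∫⁻ y in A, g y ∂μ ≤ (∫⁻ y in A, g y ^ p ∂μ) ^ (1 / p) * μ A ^ (1 / q) := by
  simpa using lintegral_mul_le_Lp_mul_Lq (μ.restrict A) hpq hg (aemeasurable_const (b := 1))

theorem ofReal_log_two_mul_setLIntegral_eq {X : Type*} [MetricSpace X] [MeasurableSpace X]
    [OpensMeasurableSpace X] (μ : Measure X) [SFinite μ] {x₀ : X} (hx₀ : μ {x₀} = 0)
    {S : Set X} {t : ℝ} (hSt : S ⊆ ball x₀ t) {g : X → ℝ≥0∞} (hg : Measurable g) :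
    ENNReal.ofReal (Real.log 2) * ∫⁻ y in S, g y ∂μ =
      ∫⁻ s in Ioo 0 t, ENNReal.ofReal s⁻¹ *
        ∫⁻ y in (ball x₀ (2 * s) \ closedBall x₀ s) ∩ S, g y ∂μ := by
  set F : ℝ → X → ℝ≥0∞ := fun s =>
    (ball x₀ (2 * s) \ closedBall x₀ s).indicator fun y => ENNReal.ofReal s⁻¹ * g y
  have hdist : Measurable fun q : ℝ × X => dist q.2 x₀ :=
    (continuous_id.dist continuous_const).measurable.comp measurable_snd
  have hF : Measurable (Function.uncurry F) :=
    (measurable_fst.inv.ennreal_ofReal.mul (hg.comp measurable_snd)).indicator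
      ((measurableSet_lt hdist (measurable_const.mul measurable_fst)).inter
        (measurableSet_le hdist measurable_fst).compl)
  have hlayer : ∀ y ∈ ball x₀ t, y ≠ x₀ →
      ∫⁻ s in Ioo 0 t, F s y = ENNReal.ofReal (Real.log 2) * g y := by
    intro y hy hyx
    have hr : 0 < dist y x₀ := dist_pos.2 hyx
    have hmem : ∀ s,
        y ∈ ball x₀ (2 * s) \ closedBall x₀ s ↔ s ∈ Ioo (dist y x₀ / 2) (dist y x₀) := by
      intro s
      simp only [Set.mem_sdiff, mem_ball, mem_closedBall, not_le, mem_Ioo]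
      constructor <;> rintro ⟨h₁, h₂⟩ <;> constructor <;> linarith
    have hF_eq : (fun s => F s y) =
        (Ioo (dist y x₀ / 2) (dist y x₀)).indicator fun s => ENNReal.ofReal s⁻¹ * g y := by
      ext s
      simp only [F, indicator, hmem]
    have hsub : Ioo (dist y x₀ / 2) (dist y x₀) ⊆ Ioo 0 t :=
      Ioo_subset_Ioo (by positivity) (mem_ball.1 hy).le
    rw [hF_eq, lintegral_indicator measurableSet_Ioo, Measure.restrict_restrict measurableSet_Ioo,
      inter_eq_left.2 hsub, lintegral_mul_const _ measurable_inv.ennreal_ofReal,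
      lintegral_Ioo_ofReal_inv (by positivity) (by linarith), div_div_cancel₀ hr.ne']
  calc ENNReal.ofReal (Real.log 2) * ∫⁻ y in S, g y ∂μ
      = ∫⁻ y in S, (∫⁻ s in Ioo 0 t, F s y) ∂μ := by
        rw [← lintegral_const_mul _ hg]
        refine lintegral_congr_ae ?_
        filter_upwards
          [ae_restrict_of_ae_restrict_of_subset hSt (ae_restrict_mem measurableSet_ball),
          ae_restrict_of_ae (measure_eq_zero_iff_ae_notMem.1 hx₀)] with y hy hyx
        exact (hlayer y hy hyx).symm
    _ = ∫⁻ s in Ioo 0 t, ∫⁻ y in S, F s y ∂μ :=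
        lintegral_lintegral_swap (f := fun y s => F s y) (hF.comp measurable_swap).aemeasurable
    _ = _ := by
        refine lintegral_congr fun s => ?_
        rw [lintegral_indicator (measurableSet_ball.diff measurableSet_closedBall),
          Measure.restrict_restrict (measurableSet_ball.diff measurableSet_closedBall),
          lintegral_const_mul _ hg]

theorem setLIntegral_rpow_dist_mul_le {X : Type*} [PseudoMetricSpace X] [MeasurableSpace X]
    [OpensMeasurableSpace X] (μ : Measure X) {p q : ℝ} (hpq : p.HolderConjugate q) (γ : ℝ)
    (Ω : Set X) (x₀ : X) {s : ℝ} (hs : 0 < s) {g : X → ℝ≥0∞} (hg : AEMeasurable g μ) :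
    ∫⁻ y in (Ω \ ball x₀ s) ∩ ball x₀ (2 * s), ENNReal.ofReal (dist y x₀ ^ γ) * g y ∂μ ≤
      ENNReal.ofReal (max 1 (2 ^ γ) * s ^ γ) *
        ((∫⁻ y in Ω \ ball x₀ s, g y ^ p ∂μ) ^ (1 / p) * μ (ball x₀ (2 * s)) ^ (1 / q)) := by
  set R := (Ω \ ball x₀ s) ∩ ball x₀ (2 * s)
  have hR : R ⊆ ball x₀ (2 * s) \ ball x₀ s := fun y hy => ⟨hy.2, hy.1.2⟩
  calc ∫⁻ y in R, ENNReal.ofReal (dist y x₀ ^ γ) * g y ∂μ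
      ≤ ∫⁻ y in R, ENNReal.ofReal (max 1 (2 ^ γ) * s ^ γ) * g y ∂μ := by
        refine lintegral_mono_ae ?_
        filter_upwards [ae_restrict_of_ae_restrict_of_subset hR
          (ae_restrict_mem (measurableSet_ball.diff measurableSet_ball))] with y hy
        have hy₁ : s ≤ dist y x₀ := not_lt.1 hy.2
        have hy₂ : dist y x₀ ≤ 2 * s := (mem_ball.1 hy.1).le
        gcongr
        exact rpow_le_max_one_two_rpow_mul_rpow hs hy₁ hy₂ γ
    _ = ENNReal.ofReal (max 1 (2 ^ γ) * s ^ γ) * ∫⁻ y in R, g y ∂μ :=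
        lintegral_const_mul' _ _ ENNReal.ofReal_ne_top
    _ ≤ _ := by
        gcongr
        calc ∫⁻ y in R, g y ∂μ ≤ (∫⁻ y in R, g y ^ p ∂μ) ^ (1 / p) * μ R ^ (1 / q) :=
              setLIntegral_le_lintegral_rpow_mul_measure_rpow μ hpq R hg.restrict
          _ ≤ _ := by
              have hp := hpq.pos
              have hq := hpq.symm.pos
              gcongr (?_ ^ _) * (?_ ^ _)
              · exact lintegral_mono_set inter_subset_left
              · exact measure_mono inter_subset_right

section AddHaar

variable {E : Type*} [NormedAddCommGroup E] [NormedSpace ℝ E] [FiniteDimensional ℝ E]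
  [MeasurableSpace E] [BorelSpace E] (μ : Measure E) [μ.IsAddHaarMeasure]

theorem addHaar_ball_rpow (x : E) {r a : ℝ} (hr : 0 < r) (ha : 0 ≤ a) :
    μ (ball x r) ^ a = ENNReal.ofReal (r ^ (finrank ℝ E * a)) * μ (ball 0 1) ^ a := by
  rw [Measure.addHaar_ball_of_pos μ x hr, ENNReal.mul_rpow_of_nonneg _ _ ha,
    ENNReal.ofReal_rpow_of_nonneg (by positivity) ha, ← Real.rpow_natCast,
    ← Real.rpow_mul hr.le]

theorem setLIntegral_inter_ball_rpow_norm_mul_le [Nontrivial E] {p q : ℝ}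
    (hpq : p.HolderConjugate q) (γ : ℝ) (Ω : Set E) (x₀ : E) {g : E → ℝ≥0∞} (hg : Measurable g)
    (t : ℝ) :
    ∫⁻ y in Ω ∩ ball x₀ t, ENNReal.ofReal (‖y - x₀‖ ^ γ) * g y ∂μ ≤
      ENNReal.ofReal ((Real.log 2)⁻¹ * max 1 (2 ^ γ) * 2 ^ (finrank ℝ E / q)) *
        μ (ball 0 1) ^ (1 / q) *
      ∫⁻ s in Ioo 0 t, ENNReal.ofReal (s ^ (γ + finrank ℝ E / q - 1)) *
        (∫⁻ y in Ω \ ball x₀ s, g y ^ p ∂μ) ^ (1 / p) := by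
  set M : ℝ := max 1 (2 ^ γ)
  set N : ℝ → ℝ≥0∞ := fun s => (∫⁻ y in Ω \ ball x₀ s, g y ^ p ∂μ) ^ (1 / p)
  set K : ℝ≥0∞ := ENNReal.ofReal (M * 2 ^ (finrank ℝ E / q)) * μ (ball 0 1) ^ (1 / q)
  have hq : 0 < q := hpq.symm.pos
  have hlog : 0 < Real.log 2 := Real.log_pos one_lt_two
  have hw : Measurable fun y => ENNReal.ofReal (‖y - x₀‖ ^ γ) * g y := by fun_prop
  have hannulus : ∀ s ∈ Ioo 0 t, ENNReal.ofReal s⁻¹ *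
      ∫⁻ y in (ball x₀ (2 * s) \ closedBall x₀ s) ∩ (Ω ∩ ball x₀ t),
        ENNReal.ofReal (‖y - x₀‖ ^ γ) * g y ∂μ ≤
      K * (ENNReal.ofReal (s ^ (γ + finrank ℝ E / q - 1)) * N s) := by
    rintro s ⟨hs, -⟩
    have hcoef : ENNReal.ofReal s⁻¹ * ENNReal.ofReal (M * s ^ γ) *
        ENNReal.ofReal ((2 * s) ^ (finrank ℝ E * (1 / q))) =
        ENNReal.ofReal (M * 2 ^ (finrank ℝ E / q)) *
          ENNReal.ofReal (s ^ (γ + finrank ℝ E / q - 1)) := by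
      rw [← ENNReal.ofReal_mul (by positivity), ← ENNReal.ofReal_mul (by positivity),
        ← ENNReal.ofReal_mul (by positivity), mul_one_div, Real.mul_rpow zero_le_two hs.le,
        Real.rpow_sub hs, Real.rpow_add hs, Real.rpow_one]
      congr 1
      field_simp
    calc ENNReal.ofReal s⁻¹ * ∫⁻ y in (ball x₀ (2 * s) \ closedBall x₀ s) ∩ (Ω ∩ ball x₀ t),
          ENNReal.ofReal (‖y - x₀‖ ^ γ) * g y ∂μ
        ≤ ENNReal.ofReal s⁻¹ * ∫⁻ y in (Ω \ ball x₀ s) ∩ ball x₀ (2 * s),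
          ENNReal.ofReal (dist y x₀ ^ γ) * g y ∂μ := by
          simp_rw [dist_eq_norm]
          gcongr ENNReal.ofReal s⁻¹ * ?_
          refine lintegral_mono_set fun y ⟨⟨h2s, hout⟩, hΩ, _⟩ => ⟨⟨hΩ, ?_⟩, h2s⟩
          exact fun h => hout (ball_subset_closedBall h)
      _ ≤ ENNReal.ofReal s⁻¹ * (ENNReal.ofReal (M * s ^ γ) *
            (N s * μ (ball x₀ (2 * s)) ^ (1 / q))) := by
          gcongr
          exact setLIntegral_rpow_dist_mul_le μ hpq γ Ω x₀ hs hg.aemeasurable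
      _ = ENNReal.ofReal s⁻¹ * ENNReal.ofReal (M * s ^ γ) *
            ENNReal.ofReal ((2 * s) ^ (finrank ℝ E * (1 / q))) * μ (ball 0 1) ^ (1 / q) * N s := by
          rw [addHaar_ball_rpow μ x₀ (by positivity) (by positivity)]
          ring
      _ = K * (ENNReal.ofReal (s ^ (γ + finrank ℝ E / q - 1)) * N s) := by
          rw [hcoef]
          ring
  calc ∫⁻ y in Ω ∩ ball x₀ t, ENNReal.ofReal (‖y - x₀‖ ^ γ) * g y ∂μ
      = ENNReal.ofReal (Real.log 2)⁻¹ * (ENNReal.ofReal (Real.log 2) *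
          ∫⁻ y in Ω ∩ ball x₀ t, ENNReal.ofReal (‖y - x₀‖ ^ γ) * g y ∂μ) := by
        rw [← mul_assoc, ← ENNReal.ofReal_mul (by positivity), inv_mul_cancel₀ hlog.ne',
          ENNReal.ofReal_one, one_mul]
    _ ≤ ENNReal.ofReal (Real.log 2)⁻¹ *
          ∫⁻ s in Ioo 0 t, K * (ENNReal.ofReal (s ^ (γ + finrank ℝ E / q - 1)) * N s) := by
        rw [ofReal_log_two_mul_setLIntegral_eq μ (measure_singleton x₀) inter_subset_right hw]
        gcongr ENNReal.ofReal (Real.log 2)⁻¹ * ?_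
        exact setLIntegral_mono_ae' measurableSet_Ioo (ae_of_all _ hannulus)
    _ = _ := by
        rw [lintegral_const_mul' _ _ (by finiteness), mul_assoc _ M,
          ENNReal.ofReal_mul (by positivity)]
        simp only [K, N]
        ring

end AddHaar

theorem statement6_general
    (n : ℕ) (hn : 1 ≤ n)
    (Ω : Set (EuclideanSpace ℝ (Fin n)))
    (p pc : ℝ) (hp : 1 < p) (hpc : pc = p / (p - 1))
    (γ : ℝ)
    (ℓ : ℝ) :
    ∃ C > 0, ∀ x₀ ∈ Ω, ∀ f : EuclideanSpace ℝ (Fin n) → ℝ, Measurable f →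
      (∀ s ∈ Ioo (0 : ℝ) ℓ, lpnorm p (Ω \ ball x₀ s) f < ⊤) →
      ∀ t ∈ Ioo (0 : ℝ) ℓ,
        (∫⁻ y in Ω ∩ ball x₀ t,
            ENNReal.ofReal (‖y - x₀‖ ^ γ) * ENNReal.ofReal |f y|) ≤
          ENNReal.ofReal C *
            ∫⁻ s in Ioo (0 : ℝ) t,
              ENNReal.ofReal (s ^ (γ + (n : ℝ) / pc - 1)) * lpnorm p (Ω \ ball x₀ s) f := by
  have : NeZero n := ⟨by omega⟩
  have hpq : p.HolderConjugate pc := hpc ▸ Real.HolderConjugate.conjExponent hp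
  set K : ℝ≥0∞ := ENNReal.ofReal ((Real.log 2)⁻¹ * max 1 (2 ^ γ) * 2 ^ (n / pc)) *
    volume (ball (0 : EuclideanSpace ℝ (Fin n)) 1) ^ (1 / pc)
  have hball : volume (ball (0 : EuclideanSpace ℝ (Fin n)) 1) ≠ ⊤ := measure_ball_lt_top.ne
  have hK : K ≠ ⊤ :=
    ENNReal.mul_ne_top ENNReal.ofReal_ne_top
      (ENNReal.rpow_ne_top_of_nonneg (one_div_nonneg.2 hpq.symm.nonneg) hball)
  have hK₀ : K ≠ 0 := by
    have := Real.log_pos one_lt_two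
    exact mul_ne_zero (ENNReal.ofReal_pos.2 (by positivity)).ne'
      (ENNReal.rpow_pos (measure_ball_pos volume _ one_pos) hball).ne'
  refine ⟨K.toReal, ENNReal.toReal_pos hK₀ hK, fun x₀ _ f hf _ t _ => ?_⟩
  rw [ENNReal.ofReal_toReal hK]
  have := setLIntegral_inter_ball_rpow_norm_mul_le volume hpq γ Ω x₀ hf.abs.ennreal_ofReal t
  rwa [finrank_euclideanSpace_fin] at this

/-- Lemma 4.2: For a bounded open `Ω ⊆ ℝⁿ` of diameter `ℓ`, `1 < p < ∞`
with conjugate exponent `pc = p/(p−1)` and `γ ∈ ℝ`, there is `C > 0` depending only on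
`n, p, γ, ℓ` (not on `f`, `t`, `x₀`) such that for every `x₀ ∈ Ω`, every measurable `f`
with `‖f‖_{L^p(Ω∖B(x₀,s))} < ∞` for all `s ∈ (0,ℓ)`, and every `t ∈ (0,ℓ)`:
`∫_{Ω∩B(x₀,t)} |y−x₀|^γ |f(y)| dy ≤ C ∫_0^t s^{γ+n/p′−1} ‖f‖_{L^p(Ω∖B(x₀,s))} ds`. -/
theorem statement6
    (n : ℕ) (hn : 1 ≤ n)
    (Ω : Set (EuclideanSpace ℝ (Fin n))) (hΩo : IsOpen Ω) (hΩb : Bornology.IsBounded Ω)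
    (p pc : ℝ) (hp : 1 < p) (hpc : pc = p / (p - 1))
    (γ : ℝ)
    (ℓ : ℝ) (hℓ : ℓ = Metric.diam Ω) :
    ∃ C > 0, ∀ x₀ ∈ Ω, ∀ f : EuclideanSpace ℝ (Fin n) → ℝ, Measurable f →
      (∀ s ∈ Ioo (0 : ℝ) ℓ, lpnorm p (Ω \ ball x₀ s) f < ⊤) →
      ∀ t ∈ Ioo (0 : ℝ) ℓ,
        (∫⁻ y in Ω ∩ ball x₀ t,
            ENNReal.ofReal (‖y - x₀‖ ^ γ) * ENNReal.ofReal |f y|) ≤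
          ENNReal.ofReal C *
            ∫⁻ s in Ioo (0 : ℝ) t,
              ENNReal.ofReal (s ^ (γ + (n : ℝ) / pc - 1)) * lpnorm p (Ω \ ball x₀ s) f :=
  statement6_general n hn Ω p pc hp hpc γ ℓ
end

section
/- Let n ≥ 1, let Ω ⊂ ℝⁿ be a bounded open set with diameter ℓ, let x₀ ∈ Ω, let 1 < p < ∞ with conjugate exponent p′ = p/(p−1), and let ω : (0,∞) → (0,∞) be measurable. (a) If sup_{0<r<ℓ} r^{n/p′}/ω(r) < ∞, then there exists C > 0 with ‖f‖_{∁M^{p,ω}_{x₀}(Ω)} ≤ C ‖f‖_{L^p(Ω)} for all f ∈ L^p(Ω), i.e. L^p(Ω) embeds into ∁M^{p,ω}_{x₀}(Ω). (b) If ∫_0^ℓ ω(r) r^{−1} dr < ∞, then there exists C > 0 with ∫_Ω |f(y)| dy ≤ C ‖f‖_{∁M^{p,ω}_{x₀}(Ω)} for all measurable f, i.e. ∁M^{p,ω}_{x₀}(Ω) embeds into L^1(Ω). -/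
open MeasureTheory Metric Set ENNReal Filter Topology

/-- The norm of the local complementary generalized Morrey space `∁M^{p,ω}_{x₀}(Ω)`:
`sup_{r>0} (r^{n/p′}/ω(r)) ‖f‖_{L^p(Ω ∖ B(x₀,r))}` (here `pc` stands for `p′`). -/
noncomputable def cMnorm {n : ℕ} (p pc : ℝ) (ω : ℝ → ℝ)
    (Ω : Set (EuclideanSpace ℝ (Fin n))) (x₀ : EuclideanSpace ℝ (Fin n))
    (f : EuclideanSpace ℝ (Fin n) → ℝ) : ℝ≥0∞ :=
  ⨆ r ∈ Ioi (0 : ℝ),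
    ENNReal.ofReal (r ^ ((n : ℝ) / pc) / ω r) * lpnorm p (Ω \ ball x₀ r) f

theorem dist_lt_diam_of_isOpen {E : Type*} [NormedAddCommGroup E] [NormedSpace ℝ E]
    {Ω : Set E} (hΩo : IsOpen Ω) (hΩb : Bornology.IsBounded Ω) {x y : E} (hx : x ∈ Ω)
    (hy : y ∈ Ω) (hyx : y ≠ x) : dist y x < diam Ω := by
  obtain ⟨ε, hε, hball⟩ := Metric.isOpen_iff.mp hΩo y hy
  have hd : 0 < dist y x := dist_pos.mpr hyx
  set s := ε / (2 * dist y x)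
  have hs : 0 < s := by positivity
  have hy' : y + s • (y - x) ∈ Ω := by
    apply hball
    rw [mem_ball, dist_eq_norm, add_sub_cancel_left, norm_smul, Real.norm_of_nonneg hs.le,
      ← dist_eq_norm, show s * dist y x = ε / 2 by simp only [s]; field_simp]
    linarith
  have hdist : dist (y + s • (y - x)) x = (1 + s) * dist y x := by
    rw [dist_eq_norm, show y + s • (y - x) - x = (1 + s) • (y - x) by module, norm_smul,
      Real.norm_of_nonneg (by positivity), dist_eq_norm]
  have := dist_le_diam_of_mem hΩb hy' hx
  nlinarith

theorem exists_pos_le_ofReal {D : ℝ≥0∞} (hD : D ≠ ⊤) : ∃ C > (0 : ℝ), D ≤ ENNReal.ofReal C :=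
  ⟨D.toReal + 1, by positivity, by
    rw [← ENNReal.ofReal_toReal hD]
    exact ENNReal.ofReal_le_ofReal (by simp)⟩

theorem inv_two_le_lintegral_inv_Ico {d : ℝ} (hd : 0 < d) :
    (2 : ℝ≥0∞)⁻¹ ≤ ∫⁻ t in Ico (d / 2) d, (ENNReal.ofReal t)⁻¹ :=
  calc (2 : ℝ≥0∞)⁻¹ = ∫⁻ _ in Ico (d / 2) d, (ENNReal.ofReal d)⁻¹ := by
        rw [setLIntegral_const, Real.volume_Ico, ← ENNReal.ofReal_inv_of_pos hd,
          ← ENNReal.ofReal_mul (by positivity), show d⁻¹ * (d - d / 2) = 2⁻¹ by field_simp; ring,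
          ENNReal.ofReal_inv_of_pos two_pos, ENNReal.ofReal_ofNat]
    _ ≤ ∫⁻ t in Ico (d / 2) d, (ENNReal.ofReal t)⁻¹ :=
        setLIntegral_mono' measurableSet_Ico fun t ht =>
          ENNReal.inv_le_inv.mpr (ENNReal.ofReal_le_ofReal ht.2.le)

theorem measurableSet_setOf_mem_annulus {E : Type*} [PseudoMetricSpace E] [MeasurableSpace E]
    [OpensMeasurableSpace E] (x₀ : E) :
    MeasurableSet {q : ℝ × E | q.2 ∈ closedBall x₀ (2 * q.1) \ closedBall x₀ q.1} := by
  have hdist : Measurable fun q : ℝ × E => dist q.2 x₀ :=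
    (continuous_snd.dist continuous_const).measurable
  exact (measurableSet_le hdist (measurable_const.mul measurable_fst)).diff
    (measurableSet_le hdist measurable_fst)

theorem setLIntegral_le_two_mul_lintegral_annulus {E : Type*} [MetricSpace E]
    [MeasurableSpace E] [OpensMeasurableSpace E] {μ : Measure E} [SFinite μ]
    [NullSingletonClass μ] {Ω : Set E} (hΩ : MeasurableSet Ω) {x₀ : E} {ℓ : ℝ}
    (hΩℓ : ∀ y ∈ Ω, y ≠ x₀ → dist y x₀ < ℓ) {g : E → ℝ≥0∞} (hg : Measurable g) :
    ∫⁻ y in Ω, g y ∂μ ≤ 2 * ∫⁻ t in Ioo 0 ℓ,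
      (ENNReal.ofReal t)⁻¹ * ∫⁻ y in (closedBall x₀ (2 * t) \ closedBall x₀ t) ∩ Ω, g y ∂μ := by
  set F : ℝ → E → ℝ≥0∞ := fun t y =>
    (ENNReal.ofReal t)⁻¹ * (closedBall x₀ (2 * t) \ closedBall x₀ t).indicator g y
  have hF : Measurable (Function.uncurry F) :=
    (ENNReal.measurable_ofReal.comp measurable_fst).inv.mul
      ((hg.comp measurable_snd).indicator (measurableSet_setOf_mem_annulus x₀))
  have hsection : ∀ y ∈ Ω, y ≠ x₀ → g y ≤ 2 * ∫⁻ t in Ioo 0 ℓ, F t y := by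
    intro y hy hne
    set d := dist y x₀
    have hd : 0 < d := dist_pos.mpr hne
    have hF_eq : EqOn (fun t => (ENNReal.ofReal t)⁻¹ * g y) (F · y) (Ico (d / 2) d) := by
      intro t ht
      have hmem : y ∈ closedBall x₀ (2 * t) \ closedBall x₀ t :=
        ⟨mem_closedBall.mpr (by linarith [ht.1]), fun h => (mem_closedBall.mp h).not_gt ht.2⟩
      simp only [F, indicator_of_mem hmem]
    have hIco : Ico (d / 2) d ⊆ Ioo 0 ℓ := fun t ht =>
      ⟨by linarith [ht.1], ht.2.trans (hΩℓ y hy hne)⟩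
    calc g y = 2 * (2⁻¹ * g y) := by
          rw [← mul_assoc, ENNReal.mul_inv_cancel two_ne_zero ofNat_ne_top, one_mul]
      _ ≤ 2 * ((∫⁻ t in Ico (d / 2) d, (ENNReal.ofReal t)⁻¹) * g y) := by
          gcongr; exact inv_two_le_lintegral_inv_Ico hd
      _ = 2 * ∫⁻ t in Ico (d / 2) d, F t y := by
          rw [← lintegral_mul_const (f := fun t => (ENNReal.ofReal t)⁻¹) _
            ENNReal.measurable_ofReal.inv,
            setLIntegral_congr_fun measurableSet_Ico hF_eq]
      _ ≤ 2 * ∫⁻ t in Ioo 0 ℓ, F t y := by gcongr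
  calc ∫⁻ y in Ω, g y ∂μ ≤ ∫⁻ y in Ω, 2 * (∫⁻ t in Ioo 0 ℓ, F t y) ∂μ := by
        refine setLIntegral_mono_ae' hΩ ?_
        filter_upwards [Measure.ae_ne μ x₀] with y hne hy using hsection y hy hne
    _ = 2 * ∫⁻ t in Ioo (0 : ℝ) ℓ, ∫⁻ y in Ω, F t y ∂μ := by
        rw [lintegral_const_mul' _ _ ofNat_ne_top, ← lintegral_lintegral_swap hF.aemeasurable]
    _ = _ := by
        congr 1
        refine lintegral_congr fun t => ?_
        rw [lintegral_const_mul _ (hg.indicator (measurableSet_closedBall.diff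
          measurableSet_closedBall)), setLIntegral_indicator (measurableSet_closedBall.diff
          measurableSet_closedBall)]

section Euclidean

variable {n : ℕ} {p pc : ℝ} {ω : ℝ → ℝ} {Ω : Set (EuclideanSpace ℝ (Fin n))}
  {x₀ : EuclideanSpace ℝ (Fin n)} {f : EuclideanSpace ℝ (Fin n) → ℝ}

theorem lpnorm_mono_set (hp : 0 ≤ p) {s t : Set (EuclideanSpace ℝ (Fin n))} (hst : s ⊆ t)
    (f : EuclideanSpace ℝ (Fin n) → ℝ) : lpnorm p s f ≤ lpnorm p t f :=
  ENNReal.rpow_le_rpow (lintegral_mono_set hst) (by positivity)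

theorem lpnorm_empty (hp : 0 < p) (f : EuclideanSpace ℝ (Fin n) → ℝ) : lpnorm p ∅ f = 0 := by
  rw [lpnorm, Measure.restrict_empty, lintegral_zero_measure,
    ENNReal.zero_rpow_of_pos (by positivity)]

theorem setLIntegral_le_lpnorm_mul_volume_rpow (hpq : p.HolderConjugate pc)
    (s : Set (EuclideanSpace ℝ (Fin n))) (hf : Measurable f) :
    ∫⁻ y in s, ENNReal.ofReal |f y| ≤ lpnorm p s f * volume s ^ (1 / pc) := by
  simpa [lpnorm, setLIntegral_one] using ENNReal.lintegral_mul_le_Lp_mul_Lq (volume.restrict s) hpq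
    hf.abs.ennreal_ofReal.aemeasurable (aemeasurable_const (b := (1 : ℝ≥0∞)))

theorem lpnorm_diff_ball_le_cMnorm {r : ℝ} (hr : 0 < r) (hωr : 0 < ω r) :
    lpnorm p (Ω \ ball x₀ r) f ≤
      ENNReal.ofReal (ω r / r ^ ((n : ℝ) / pc)) * cMnorm p pc ω Ω x₀ f := by
  have hweight : 0 < r ^ ((n : ℝ) / pc) / ω r := by positivity
  have hle : ENNReal.ofReal (r ^ ((n : ℝ) / pc) / ω r) * lpnorm p (Ω \ ball x₀ r) f ≤
      cMnorm p pc ω Ω x₀ f :=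
    le_iSup₂ (f := fun r (_ : r ∈ Ioi (0 : ℝ)) =>
      ENNReal.ofReal (r ^ ((n : ℝ) / pc) / ω r) * lpnorm p (Ω \ ball x₀ r) f) r hr
  rw [← inv_div, ENNReal.ofReal_inv_of_pos hweight, ← ENNReal.div_eq_inv_mul,
    ENNReal.le_div_iff_mul_le (.inl (ENNReal.ofReal_pos.mpr hweight).ne') (.inl ofReal_ne_top),
    mul_comm]
  exact hle

theorem setLIntegral_annulus_le_cMnorm (hpq : p.HolderConjugate pc) (hf : Measurable f)
    {t : ℝ} (ht : 0 < t) (hωt : 0 < ω t) :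
    ∫⁻ y in (closedBall x₀ (2 * t) \ closedBall x₀ t) ∩ Ω, ENNReal.ofReal |f y| ≤
      ENNReal.ofReal (2 ^ ((n : ℝ) / pc) * ω t) *
        volume (closedBall (0 : EuclideanSpace ℝ (Fin n)) 1) ^ (1 / pc) *
          cMnorm p pc ω Ω x₀ f := by
  set A := (closedBall x₀ (2 * t) \ closedBall x₀ t) ∩ Ω
  set c := (n : ℝ) / pc
  have hpc : 0 < pc := hpq.symm.pos
  have hA : A ⊆ Ω \ ball x₀ t := fun _ ⟨⟨_, hyt⟩, hyΩ⟩ =>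
    ⟨hyΩ, fun hyb => hyt (ball_subset_closedBall hyb)⟩
  have hvol : volume A ^ (1 / pc) ≤ ENNReal.ofReal ((2 * t) ^ c) *
      volume (closedBall (0 : EuclideanSpace ℝ (Fin n)) 1) ^ (1 / pc) :=
    calc volume A ^ (1 / pc) ≤ volume (closedBall x₀ (2 * t)) ^ (1 / pc) := by
          gcongr; exact fun y hy => hy.1.1
      _ = _ := by
          rw [Measure.addHaar_closedBall' _ _ (by positivity), finrank_euclideanSpace_fin,
            ENNReal.mul_rpow_of_nonneg _ _ (by positivity),
            ENNReal.ofReal_rpow_of_nonneg (by positivity) (by positivity),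
            ← Real.rpow_natCast_mul (by positivity), mul_one_div]
  calc ∫⁻ y in A, ENNReal.ofReal |f y|
      ≤ lpnorm p A f * volume A ^ (1 / pc) := setLIntegral_le_lpnorm_mul_volume_rpow hpq A hf
    _ ≤ ENNReal.ofReal (ω t / t ^ c) * cMnorm p pc ω Ω x₀ f *
          (ENNReal.ofReal ((2 * t) ^ c) *
            volume (closedBall (0 : EuclideanSpace ℝ (Fin n)) 1) ^ (1 / pc)) := by
        gcongr
        exact (lpnorm_mono_set hpq.nonneg hA f).trans (lpnorm_diff_ball_le_cMnorm ht hωt)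
    _ = ENNReal.ofReal (ω t / t ^ c * (2 * t) ^ c) *
          volume (closedBall (0 : EuclideanSpace ℝ (Fin n)) 1) ^ (1 / pc) *
            cMnorm p pc ω Ω x₀ f := by
        rw [ENNReal.ofReal_mul (by positivity)]; ring
    _ = _ := by
        rw [Real.mul_rpow zero_le_two ht.le]
        congr 3
        field_simp

theorem cMnorm_le_of_forall_Ioo (hp : 0 < p) {ℓ K : ℝ} (hΩℓ : ∀ y ∈ Ω, y ≠ x₀ → dist y x₀ < ℓ)
    (hK : ∀ r ∈ Ioo (0 : ℝ) ℓ, r ^ ((n : ℝ) / pc) / ω r ≤ K) (f : EuclideanSpace ℝ (Fin n) → ℝ) :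
    cMnorm p pc ω Ω x₀ f ≤ ENNReal.ofReal K * lpnorm p Ω f := by
  refine iSup₂_le fun r (hr : 0 < r) => ?_
  rcases lt_or_ge r ℓ with hrℓ | hℓr
  · gcongr
    · exact hK r ⟨hr, hrℓ⟩
    · exact lpnorm_mono_set hp.le sdiff_subset f
  · have hempty : Ω \ ball x₀ r = ∅ := by
      refine eq_empty_of_forall_notMem fun y ⟨hy, hyr⟩ => ?_
      rw [mem_ball, not_lt] at hyr
      linarith [hΩℓ y hy (dist_pos.mp (hr.trans_le hyr))]
    simp [hempty, lpnorm_empty hp]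

theorem setLIntegral_le_cMnorm [NeZero n] (hΩ : MeasurableSet Ω) {ℓ : ℝ}
    (hΩℓ : ∀ y ∈ Ω, y ≠ x₀ → dist y x₀ < ℓ) (hpq : p.HolderConjugate pc) (hωmeas : Measurable ω)
    (hωpos : ∀ r > (0 : ℝ), 0 < ω r) (hf : Measurable f) :
    ∫⁻ y in Ω, ENNReal.ofReal |f y| ≤
      2 * ENNReal.ofReal (2 ^ ((n : ℝ) / pc)) *
        volume (closedBall (0 : EuclideanSpace ℝ (Fin n)) 1) ^ (1 / pc) *
          (∫⁻ t in Ioo (0 : ℝ) ℓ, ENNReal.ofReal (ω t / t)) * cMnorm p pc ω Ω x₀ f := by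
  set B := volume (closedBall (0 : EuclideanSpace ℝ (Fin n)) 1) ^ (1 / pc)
  set N := cMnorm p pc ω Ω x₀ f
  have hannulus : ∀ t ∈ Ioo (0 : ℝ) ℓ, (ENNReal.ofReal t)⁻¹ *
      ∫⁻ y in (closedBall x₀ (2 * t) \ closedBall x₀ t) ∩ Ω, ENNReal.ofReal |f y| ≤
        ENNReal.ofReal (ω t / t) * (ENNReal.ofReal (2 ^ ((n : ℝ) / pc)) * B * N) := by
    intro t ⟨ht, _⟩
    calc (ENNReal.ofReal t)⁻¹ *
          ∫⁻ y in (closedBall x₀ (2 * t) \ closedBall x₀ t) ∩ Ω, ENNReal.ofReal |f y|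
        ≤ (ENNReal.ofReal t)⁻¹ * (ENNReal.ofReal (2 ^ ((n : ℝ) / pc) * ω t) * B * N) := by
          gcongr; exact setLIntegral_annulus_le_cMnorm hpq hf ht (hωpos t ht)
      _ = ENNReal.ofReal (ω t / t) * (ENNReal.ofReal (2 ^ ((n : ℝ) / pc)) * B * N) := by
          rw [ENNReal.ofReal_mul (by positivity), ENNReal.ofReal_div_of_pos ht,
            ENNReal.div_eq_inv_mul]
          ring
  calc ∫⁻ y in Ω, ENNReal.ofReal |f y|
      ≤ 2 * ∫⁻ t in Ioo 0 ℓ, (ENNReal.ofReal t)⁻¹ *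
          ∫⁻ y in (closedBall x₀ (2 * t) \ closedBall x₀ t) ∩ Ω, ENNReal.ofReal |f y| :=
        setLIntegral_le_two_mul_lintegral_annulus hΩ hΩℓ hf.abs.ennreal_ofReal
    _ ≤ 2 * ∫⁻ t in Ioo 0 ℓ, ENNReal.ofReal (ω t / t) *
          (ENNReal.ofReal (2 ^ ((n : ℝ) / pc)) * B * N) := by
        gcongr 1
        exact setLIntegral_mono' measurableSet_Ioo hannulus
    _ = _ := by
        rw [lintegral_mul_const (f := fun t => ENNReal.ofReal (ω t / t)) _
          (hωmeas.div measurable_id).ennreal_ofReal]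
        ring

end Euclidean

/-- Corollary 4.3: (a) if `sup_{0<r<ℓ} r^{n/p′}/ω(r) < ∞` then
`L^p(Ω) ↪ ∁M^{p,ω}_{x₀}(Ω)`; (b) if `∫_0^ℓ ω(r) dr/r < ∞` then
`∁M^{p,ω}_{x₀}(Ω) ↪ L^1(Ω)`. -/
theorem statement7
    (n : ℕ) (hn : 1 ≤ n)
    (Ω : Set (EuclideanSpace ℝ (Fin n))) (hΩo : IsOpen Ω) (hΩb : Bornology.IsBounded Ω)
    (x₀ : EuclideanSpace ℝ (Fin n)) (hx₀ : x₀ ∈ Ω)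
    (p pc : ℝ) (hp : 1 < p) (hpc : pc = p / (p - 1))
    (ℓ : ℝ) (hℓ : ℓ = Metric.diam Ω)
    (ω : ℝ → ℝ) (hωmeas : Measurable ω) (hωpos : ∀ r > (0 : ℝ), 0 < ω r) :
    ((∃ K : ℝ, ∀ r ∈ Ioo (0 : ℝ) ℓ, r ^ ((n : ℝ) / pc) / ω r ≤ K) →
      ∃ C > 0, ∀ f : EuclideanSpace ℝ (Fin n) → ℝ, Measurable f →
        cMnorm p pc ω Ω x₀ f ≤ ENNReal.ofReal C * lpnorm p Ω f) ∧
    ((∫⁻ r in Ioo (0 : ℝ) ℓ, ENNReal.ofReal (ω r / r)) < ⊤ →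
      ∃ C > 0, ∀ f : EuclideanSpace ℝ (Fin n) → ℝ, Measurable f →
        (∫⁻ y in Ω, ENNReal.ofReal |f y|) ≤ ENNReal.ofReal C * cMnorm p pc ω Ω x₀ f) := by
  have hΩℓ : ∀ y ∈ Ω, y ≠ x₀ → dist y x₀ < ℓ := fun y hy hne =>
    hℓ ▸ dist_lt_diam_of_isOpen hΩo hΩb hx₀ hy hne
  have hpq : p.HolderConjugate pc := hpc ▸ Real.HolderConjugate.conjExponent hp
  refine ⟨fun ⟨K, hK⟩ => ?_, fun hI => ?_⟩
  · obtain ⟨C, hC, hKC⟩ := exists_pos_le_ofReal (ENNReal.ofReal_ne_top (r := K))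
    exact ⟨C, hC, fun f _ =>
      (cMnorm_le_of_forall_Ioo hpq.pos hΩℓ hK f).trans (by gcongr)⟩
  · have : NeZero n := ⟨by omega⟩
    have hB : volume (closedBall (0 : EuclideanSpace ℝ (Fin n)) 1) ^ (1 / pc) ≠ ⊤ :=
      ENNReal.rpow_ne_top_of_nonneg (one_div_pos.mpr hpq.symm.pos).le
        (isCompact_closedBall 0 1).measure_lt_top.ne
    obtain ⟨C, hC, hDC⟩ := exists_pos_le_ofReal (by finiteness :
      2 * ENNReal.ofReal (2 ^ ((n : ℝ) / pc)) *
        volume (closedBall (0 : EuclideanSpace ℝ (Fin n)) 1) ^ (1 / pc) *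
          (∫⁻ t in Ioo (0 : ℝ) ℓ, ENNReal.ofReal (ω t / t)) ≠ ⊤)
    exact ⟨C, hC, fun f hf =>
      (setLIntegral_le_cMnorm hΩo.measurableSet hΩℓ hpq hωmeas hωpos hf).trans (by gcongr)⟩
end
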